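/- arXiv:1905.06713 — 10 statements merged into one kernel-verified Lean document; each statement's English description precedes it below -/
import Mathlib

section
/- Let X be a countably infinite set and let F = (F_x)_{x∈X} be a family of finite-dimensional complex normed vector spaces. Equip the space of vector fields Γ(X;F) = ∏_{x∈X} F_x with the product topology, and let A : Γ(X;F) → Γ(X;F) be a continuous linear operator. Then A is surjective if and only if the following injectivity holds: whenever φ = (φ_x)_{x∈X} is a finitely supported family of continuous linear functionals φ_x ∈ F_x' such that ∑_{x∈X} φ_x(Af(x)) = 0 for every f ∈ Γ(X;F), then φ_x = 0 for all x ∈ X. -/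
/-! By finite-dimensional duality the dual condition says that `A` is onto on every finite set `T`
of coordinates: the solutions of `A f = g` on `T` form a nonempty closed affine subspace `K T`.
The `K T` form a directed family, and in a countable product of finite-dimensional spaces such a
family has a common point. Over each finite set of coordinates the images of the `K T` stabilise by
dimension counting, so partial solutions extend block by block along an exhaustion of `X`, and the
limit lies in every `K T` because these are closed. Conversely, surjectivity is tested on
`A f = Pi.single x v`. -/

open Function Module

namespace AffineSubspace

variable {k V P : Type*} [DivisionRing k] [AddCommGroup V] [Module k V] [AddTorsor V P]
  [FiniteDimensional k V]

theorem exists_forall_le_of_directed {ι : Type*} [Nonempty ι] {s : ι → AffineSubspace k P}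
    (hdir : Directed (· ≥ ·) s) (hne : ∀ i, (s i : Set P).Nonempty) :
    ∃ i₀, ∀ i, s i₀ ≤ s i := by
  let i₀ := argmin fun i => finrank k (s i).direction
  refine ⟨i₀, fun i => ?_⟩
  obtain ⟨j, hji, hji₀⟩ := hdir i i₀
  have hdirection : (s j).direction = (s i₀).direction :=
    Submodule.eq_of_le_of_finrank_le (direction_le hji₀)
      (argmin_le (fun i => finrank k (s i).direction) j)
  rw [← eq_of_direction_eq_of_nonempty_of_le hdirection (hne j) hji₀]
  exact hji

end AffineSubspace

def Finset.restrictₗ (R : Type*) [Semiring R] {X : Type*} {F : X → Type*}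
    [∀ x, AddCommMonoid (F x)] [∀ x, Module R (F x)] (T : Finset X) :
    (∀ x, F x) →ₗ[R] ∀ x : T, F x where
  toFun := T.restrict
  map_add' _ _ := rfl
  map_smul' _ _ := rfl

theorem Finset.restrict_single_of_notMem {X : Type*} [DecidableEq X] {F : X → Type*}
    [∀ x, Zero (F x)] {T : Finset X} {x : X} (hx : x ∉ T) (v : F x) :
    T.restrict (Pi.single x v) = 0 := by
  ext ⟨y, hy⟩
  exact Pi.single_eq_of_ne (by rintro rfl; exact hx hy) v

theorem Finset.finsum_apply_restrict_single {X : Type*} [DecidableEq X] {F : X → Type*}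
    [∀ x, AddCommMonoid (F x)] {M : Type*} [AddCommMonoid M] (T : Finset X)
    (ψ : (∀ x : T, F x) →+ M) (u : ∀ x, F x) :
    ∑ᶠ x, ψ (T.restrict (Pi.single x (u x))) = ψ (T.restrict u) := by
  have hsupp : support (fun x => ψ (T.restrict (Pi.single x (u x)))) ⊆ T := fun x hx => by
    by_contra hxT
    exact hx (by simp only [restrict_single_of_notMem hxT, map_zero])
  rw [finsum_eq_sum_of_support_subset _ hsupp, ← map_sum ψ]
  congr 1
  ext y
  simp only [Finset.sum_apply, Finset.restrict, Finset.sum_pi_single, if_pos y.2]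

theorem IsClosed.mem_of_forall_finset_exists_agree {X : Type*} {F : X → Type*}
    [∀ x, TopologicalSpace (F x)] {K : Set (∀ x, F x)} (hK : IsClosed K) {f : ∀ x, F x}
    (h : ∀ T : Finset X, ∃ g ∈ K, ∀ x ∈ T, g x = f x) : f ∈ K := by
  refine hK.closure_subset (mem_closure_iff_nhds.2 fun U hU => ?_)
  rw [nhds_pi, Filter.mem_pi'] at hU
  obtain ⟨T, t, ht, hTt⟩ := hU
  obtain ⟨g, hgK, hgf⟩ := h T
  exact ⟨g, hTt fun x hx => hgf x hx ▸ mem_of_mem_nhds (ht x), hgK⟩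

theorem Pi.exists_forall_finset_of_extend {X : Type*} [Countable X] {F : X → Type*}
    (P : Finset X → (∀ x, F x) → Prop)
    (hmono : ∀ ⦃T T'⦄, T ⊆ T' → ∀ f, P T' f → P T f)
    (hlocal : ∀ (T : Finset X) ⦃f g : ∀ x, F x⦄, (∀ x ∈ T, f x = g x) → P T f → P T g)
    (hext : ∀ T T' f, P T f → ∃ g, P T' g ∧ ∀ x ∈ T, g x = f x) {f₀ : ∀ x, F x} (h₀ : P ∅ f₀) :
    ∃ f, ∀ T, P T f := by
  obtain ⟨S, hSmono, hS⟩ := Filter.exists_seq_monotone_tendsto_atTop_atTop (Finset X)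
  have hcover (T : Finset X) : ∃ n, T ⊆ S n :=
    (Filter.tendsto_atTop_atTop.1 hS T).imp fun n hn => hn n le_rfl
  obtain ⟨g₀, hg₀, -⟩ := hext ∅ (S 0) f₀ h₀
  choose! next hnextP hnextEq using fun n f (hf : P (S n) f) => hext (S n) (S (n + 1)) f hf
  let seq (n : ℕ) : ∀ x, F x := Nat.rec g₀ next n
  have hseqP (n : ℕ) : P (S n) (seq n) := by
    induction n with
    | zero => exact hg₀
    | succ n ih => exact hnextP n _ ih
  have hseq_agree (n m : ℕ) (hnm : n ≤ m) : ∀ x ∈ S n, seq m x = seq n x := by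
    induction m, hnm using Nat.le_induction with
    | base => exact fun _ _ => rfl
    | succ m hnm ih =>
      exact fun x hx => (hnextEq m _ (hseqP m) x (hSmono hnm hx)).trans (ih x hx)
  choose N hN using fun x => hcover {x}
  let f (x : X) : F x := seq (N x) x
  have hf (n : ℕ) : ∀ x ∈ S n, seq n x = f x := fun x hx =>
    (hseq_agree n (max n (N x)) (le_max_left _ _) x hx).symm.trans
      (hseq_agree (N x) (max n (N x)) (le_max_right _ _) x (hN x (Finset.mem_singleton_self x)))
  refine ⟨f, fun T => ?_⟩
  obtain ⟨n, hn⟩ := hcover T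
  exact hmono hn f (hlocal _ (hf n) (hseqP n))

theorem Pi.exists_mem_of_directed_affineSubspace {𝕜 : Type*} [DivisionRing 𝕜] {X : Type*}
    [Countable X] {F : X → Type*} [∀ x, AddCommGroup (F x)] [∀ x, Module 𝕜 (F x)]
    [∀ x, FiniteDimensional 𝕜 (F x)] [∀ x, TopologicalSpace (F x)] {ι : Type*} [Nonempty ι]
    (K : ι → AffineSubspace 𝕜 (∀ x, F x)) (hdir : Directed (· ≥ ·) K)
    (hne : ∀ i, (K i : Set (∀ x, F x)).Nonempty) (hcl : ∀ i, IsClosed (K i : Set (∀ x, F x))) :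
    ∃ f, ∀ i, f ∈ K i := by
  let P (T : Finset X) (f : ∀ x, F x) : Prop := ∀ i, ∃ g ∈ K i, ∀ x ∈ T, g x = f x
  have hext (T T' : Finset X) (f : ∀ x, F x) (hf : P T f) :
      ∃ g, P T' g ∧ ∀ x ∈ T, g x = f x := by
    -- Mittag-Leffler: the images of the `K i` on the coordinates `T'` stabilise at `K i₀`.
    obtain ⟨i₀, hi₀⟩ := AffineSubspace.exists_forall_le_of_directed
      (s := fun i => (K i).map (T'.restrictₗ 𝕜).toAffineMap)
      (hdir.mono_comp (· ≥ ·) (rb := (· ≥ ·)) fun _ _ h => AffineSubspace.map_mono _ h)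
      (fun i => (hne i).image _)
    obtain ⟨g, hgK, hgf⟩ := hf i₀
    refine ⟨g, fun i => ?_, hgf⟩
    obtain ⟨g', hg'K, hg'g⟩ := hi₀ i ⟨g, hgK, rfl⟩
    exact ⟨g', hg'K, fun x hx => congrFun hg'g ⟨x, hx⟩⟩
  obtain ⟨f, hf⟩ := Pi.exists_forall_finset_of_extend P
    (fun T T' hTT' f hf i =>
      (hf i).imp fun g ⟨hgK, hgf⟩ => ⟨hgK, fun x hx => hgf x (hTT' hx)⟩)
    (fun T f f' hff' hf i =>
      (hf i).imp fun g ⟨hgK, hgf⟩ => ⟨hgK, fun x hx => (hgf x hx).trans (hff' x hx)⟩)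
    hext (f₀ := 0) (fun i => (hne i).imp fun g hg => ⟨hg, by simp⟩)
  exact ⟨f, fun i => (hcl i).mem_of_forall_finset_exists_agree fun T => hf T i⟩

section SolutionsOn

variable {R : Type*} [Ring R] {X : Type*} {F : X → Type*} [∀ x, AddCommGroup (F x)]
  [∀ x, Module R (F x)] (A : (∀ x, F x) →ₗ[R] ∀ x, F x) (g : ∀ x, F x)

def solutionsOn (T : Finset X) : AffineSubspace R (∀ x, F x) :=
  (affineSpan R {T.restrict g}).comap (T.restrictₗ R ∘ₗ A).toAffineMap

variable {A g}

theorem mem_solutionsOn {T : Finset X} {f : ∀ x, F x} :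
    f ∈ solutionsOn A g T ↔ T.restrict (A f) = T.restrict g :=
  AffineSubspace.mem_affineSpan_singleton _ _

variable (A g)

theorem antitone_solutionsOn : Antitone (solutionsOn A g) := fun _ _ hTT' _ hf =>
  mem_solutionsOn.2 <| funext fun x =>
    congrFun (mem_solutionsOn.1 hf) ⟨x, Finset.mem_of_subset hTT' x.2⟩

theorem nonempty_solutionsOn {T : Finset X} (hA : Surjective (T.restrictₗ R ∘ₗ A)) :
    (solutionsOn A g T : Set (∀ x, F x)).Nonempty :=
  (hA (T.restrict g)).imp fun _ => mem_solutionsOn.2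

theorem isClosed_solutionsOn [∀ x, TopologicalSpace (F x)] [∀ x, T1Space (F x)]
    (hA : Continuous A) (T : Finset X) : IsClosed (solutionsOn A g T : Set (∀ x, F x)) := by
  rw [solutionsOn, AffineSubspace.coe_comap, AffineSubspace.coe_affineSpan_singleton]
  exact isClosed_singleton.preimage (T.continuous_restrict.comp hA)

end SolutionsOn

theorem Finset.surjective_restrictₗ_comp_of_dual_injective {𝕜 : Type*}
    [NontriviallyNormedField 𝕜] [CompleteSpace 𝕜] {X : Type*} {F : X → Type*}
    [∀ x, NormedAddCommGroup (F x)] [∀ x, NormedSpace 𝕜 (F x)] [∀ x, FiniteDimensional 𝕜 (F x)]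
    (A : (∀ x, F x) →ₗ[𝕜] ∀ x, F x)
    (hinj : ∀ φ : ∀ x, F x →L[𝕜] 𝕜, {x | φ x ≠ 0}.Finite →
      (∀ f : ∀ x, F x, ∑ᶠ x, φ x (A f x) = 0) → ∀ x, φ x = 0)
    (T : Finset X) : Surjective (T.restrictₗ 𝕜 ∘ₗ A) := by
  classical
  rw [← LinearMap.dualMap_injective_iff, injective_iff_map_eq_zero]
  intro ψ hψ
  let φ (x : X) : F x →L[𝕜] 𝕜 :=
    LinearMap.toContinuousLinearMap (ψ ∘ₗ T.restrictₗ 𝕜 ∘ₗ LinearMap.single 𝕜 F x)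
  have hφ (u : ∀ x, F x) : ∑ᶠ x, φ x (u x) = ψ (T.restrict u) :=
    T.finsum_apply_restrict_single ψ.toAddMonoidHom u
  have hsupp : {x | φ x ≠ 0} ⊆ T := fun x hx => by
    by_contra hxT
    refine hx (ContinuousLinearMap.ext fun v => ?_)
    change ψ (T.restrict (Pi.single x v)) = 0
    rw [restrict_single_of_notMem hxT, map_zero]
  have hφ_zero := hinj φ (T.finite_toSet.subset hsupp) fun f =>
    (hφ (A f)).trans (LinearMap.congr_fun hψ f)
  refine LinearMap.ext fun w => ?_
  let u (x : X) : F x := if h : x ∈ T then w ⟨x, h⟩ else 0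
  have hu : T.restrict u = w := funext fun x => dif_pos x.2
  rw [← hu, ← hφ]
  simp [hφ_zero]

theorem surjective_iff_dual_injective_general
    {X : Type*} [Countable X]
    (F : X → Type*) [∀ x, NormedAddCommGroup (F x)] [∀ x, NormedSpace ℂ (F x)]
    [∀ x, FiniteDimensional ℂ (F x)]
    (A : (∀ x, F x) →L[ℂ] (∀ x, F x)) :
    Function.Surjective A ↔
      ∀ φ : ∀ x, F x →L[ℂ] ℂ, {x | φ x ≠ 0}.Finite →
        (∀ f : ∀ x, F x, ∑ᶠ x, φ x (A f x) = 0) → ∀ x, φ x = 0 := by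
  classical
  constructor
  · intro hA φ _ hφ x
    ext v
    obtain ⟨f, hf⟩ := hA (Pi.single x v)
    have := hφ f
    rw [hf, finsum_eq_single _ x fun y hy => by simp [hy]] at this
    simpa using this
  · intro hinj g
    obtain ⟨f, hf⟩ := Pi.exists_mem_of_directed_affineSubspace (solutionsOn (A : _ →ₗ[ℂ] _) g)
      (antitone_solutionsOn _ g).directed_ge
      (fun T => nonempty_solutionsOn _ g (T.surjective_restrictₗ_comp_of_dual_injective _ hinj))
      (isClosed_solutionsOn _ g A.continuous)
    exact ⟨f, funext fun x =>
      congrFun (mem_solutionsOn.1 (hf {x})) ⟨x, Finset.mem_singleton_self x⟩⟩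

/-- **Eidelheit-type surjectivity criterion.**
Let `X` be a countably infinite set and `F = (F x)_{x ∈ X}` a family of finite-dimensional
complex normed vector spaces.  Equip `Γ(X;F) = ∀ x, F x` with the product topology and let
`A : Γ(X;F) → Γ(X;F)` be a continuous linear operator.  Then `A` is surjective if and only if
for every finitely supported family `φ = (φ x)_{x ∈ X}` of continuous linear functionals
`φ x ∈ (F x)'` satisfying `∑ x, φ x (A f x) = 0` for all `f ∈ Γ(X;F)`, we have `φ x = 0`
for all `x`. -/
theorem surjective_iff_dual_injective
    {X : Type*} [Countable X] [Infinite X]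
    (F : X → Type*) [∀ x, NormedAddCommGroup (F x)] [∀ x, NormedSpace ℂ (F x)]
    [∀ x, FiniteDimensional ℂ (F x)]
    (A : (∀ x, F x) →L[ℂ] (∀ x, F x)) :
    Function.Surjective A ↔
      ∀ φ : ∀ x, F x →L[ℂ] ℂ, {x | φ x ≠ 0}.Finite →
        (∀ f : ∀ x, F x, ∑ᶠ x, φ x (A f x) = 0) → ∀ x, φ x = 0 :=
  surjective_iff_dual_injective_general F A
end

section
/- Let X be a countable set and let F = (F_x)_{x∈X} be a family of finite-dimensional complex normed vector spaces. A linear operator A : Γ(X;F) → Γ(X;F) on the product space Γ(X;F) = ∏_x F_x (with product topology) is continuous if and only if A has finite hopping range, i.e., for each x ∈ X there exists a finite subset K ⊆ X such that Af(x) depends only on f|_K (that is, f|_K = g|_K implies Af(x) = Ag(x) for all f,g ∈ Γ(X;F)). -/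
/-- **Continuity = finite hopping range.**
Let `X` be a countable set and `F = (F x)_{x ∈ X}` a family of finite-dimensional complex
normed vector spaces.  A linear operator `A` on `Γ(X;F) = ∀ x, F x` (product topology) is
continuous if and only if for every `x ∈ X` there is a finite set `K ⊆ X` such that
`A f x` only depends on `f|_K`. -/
theorem continuous_iff_finite_hopping_range
    {X : Type*} [Countable X]
    (F : X → Type*) [∀ x, NormedAddCommGroup (F x)] [∀ x, NormedSpace ℂ (F x)]
    [∀ x, FiniteDimensional ℂ (F x)]
    (A : (∀ x, F x) →ₗ[ℂ] (∀ x, F x)) :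
    Continuous A ↔
      ∀ x : X, ∃ K : Finset X, ∀ f g : ∀ x, F x,
        (∀ y ∈ K, f y = g y) → A f x = A g x := by
  constructor
  · intro hA x
    have hc : Continuous fun f : ∀ x, F x => A f x := (continuous_apply x).comp hA
    have h0 : (fun f : ∀ x, F x => A f x) 0 = 0 := by simp
    have hs : {f : ∀ x, F x | ‖A f x‖ < 1} ∈ nhds (0 : ∀ x, F x) := by
      have := hc.continuousAt (x := (0 : ∀ x, F x))
      have hb : {v : F x | ‖v‖ < 1} ∈ nhds ((fun f : ∀ x, F x => A f x) 0) := by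
        rw [h0]
        simpa [Metric.ball, dist_zero_right] using Metric.ball_mem_nhds (0 : F x) one_pos
      exact this hb
    rw [nhds_pi, Filter.mem_pi] at hs
    obtain ⟨I, hIfin, t, ht, hsub⟩ := hs
    refine ⟨hIfin.toFinset, fun f g hfg => ?_⟩
    set h : ∀ x, F x := f - g with hh
    have hmem : ∀ c : ℂ, ‖A (c • h) x‖ < 1 := by
      intro c
      apply hsub
      intro i hi
      have : h i = 0 := by
        have := hfg i (hIfin.mem_toFinset.mpr hi)
        simp [hh, this]
      simp only [Pi.smul_apply, this, smul_zero]
      exact mem_of_mem_nhds (ht i)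
    have hzero : A h x = 0 := by
      by_contra hne
      have hn : 0 < ‖A h x‖ := norm_pos_iff.mpr hne
      have h2 := hmem ((2 / ‖A h x‖ : ℝ) : ℂ)
      rw [map_smul] at h2
      simp only [Pi.smul_apply, norm_smul, Complex.norm_real, Real.norm_eq_abs] at h2
      rw [abs_of_pos (by positivity)] at h2
      rw [div_mul_cancel₀ 2 (ne_of_gt hn)] at h2
      linarith
    have hsub0 : A f x - A g x = 0 := by
      calc A f x - A g x = (A f - A g) x := rfl
        _ = A (f - g) x := by rw [← map_sub]
        _ = 0 := hzero
    exact sub_eq_zero.mp hsub0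
  · intro hA
    apply continuous_pi
    intro x
    obtain ⟨K, hK⟩ := hA x
    classical
    -- extension map
    let E : (∀ y : K, F y) →ₗ[ℂ] (∀ x, F x) :=
      LinearMap.pi fun z =>
        if h : z ∈ K then (LinearMap.proj (⟨z, h⟩ : K) : (∀ y : K, F y) →ₗ[ℂ] F z)
        else 0
    let B : (∀ y : K, F y) →ₗ[ℂ] F x := (LinearMap.proj x).comp (A.comp E)
    have hBc : Continuous B := B.continuous_of_finiteDimensional
    have key : ∀ f : ∀ x, F x, A f x = B (fun y : K => f y) := by
      intro f
      have : A f x = A (E fun y : K => f y) x := by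
        apply hK
        intro y hy
        simp [E, LinearMap.pi_apply, dif_pos hy]
      simpa [B] using this
    have : (fun f : ∀ x, F x => A f x) = fun f => B (fun y : K => f y) := funext key
    rw [this]
    exact hBc.comp (continuous_pi fun y : K => continuous_apply (y : X))
end

section
/- Let (X,b) be a locally finite weighted graph all of whose connected components are infinite, and let V : X → ℝ be a potential such that the quadratic form q_V is nonnegative on C_c(X) or the quadratic form q_{-V-2deg} is nonnegative on C_c(X). Then the Schrödinger operator L_V : C(X) → C(X), L_V f(x) = ∑_{y∈X} b(x,y)(f(x)-f(y)) + V(x)f(x), is surjective. -/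
/-- The quadratic form `q_V(f) = (1/2)∑_{x,y} b(x,y)|f x - f y|² + ∑_x V(x)|f x|²`
associated with a weighted graph `b` and a potential `V`. -/
noncomputable def qForm {X : Type*} (b : X → X → ℝ) (V : X → ℝ) (f : X → ℂ) : ℝ :=
  (1 / 2) * ∑' x, ∑' y, b x y * ‖f x - f y‖ ^ 2 + ∑' x, V x * ‖f x‖ ^ 2

/-- The (weighted) degree `deg(x) = ∑_y b(x,y)` of a vertex. -/
noncomputable def degree {X : Type*} (b : X → X → ℝ) (x : X) : ℝ := ∑' y, b x y

/-!
The rows of the matrix of `L_V` are finitely supported, and since `C(X)` is the dual of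
`C_c(X)`, `L_V` is surjective on `C(X)` as soon as these rows are linearly independent. Pairing
a real dependence `∑ p(x) row_x = 0` with `p` gives `q_V(p) = ∑ p(x) L_V p(x) = 0`.

Passing from `p` to `|p|` does not increase `q_V`, and `q_{-V-2deg}(|p|) ≤ -q_V(p)` because
`|p x - p y| ≤ |p x| + |p y|`. So in either case `|p|` is a zero of a nonnegative form `q_P`, and
therefore `L_P |p| = 0`. If `p ≠ 0`, the component of a point of its support is infinite, so some
`x₀` outside the support is adjacent to it, and there `L_P |p| (x₀) = -∑_y b(x₀,y)|p y| < 0`.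
Complex right-hand sides are handled through their real and imaginary parts.
-/

open Function Finset

section

variable {X : Type*} {b : X → X → ℝ}

theorem Relation.ReflTransGen.exists_rel_mem_not_mem {α : Type*} {r : α → α → Prop} {S : Set α}
    {a c : α} (h : Relation.ReflTransGen r a c) (ha : a ∈ S) (hc : c ∉ S) :
    ∃ x ∈ S, ∃ y ∉ S, r x y := by
  induction h with
  | refl => exact absurd ha hc
  | @tail m c _ hmc ih =>
    by_cases hm : m ∈ S
    · exact ⟨m, hm, c, hc, hmc⟩
    · exact ih hm

theorem Function.support_abs {M : Type*} [AddCommGroup M] [LinearOrder M] [IsOrderedAddMonoid M]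
    (f : X → M) : support |f| = support f := by
  ext
  simp

-- `X → K` is the dual of `X →₀ K`, and the dual of an injective map is surjective.
theorem surjective_linearCombination_of_linearIndependent {K ι : Type*} [Field K]
    {a : ι → X →₀ K} (ha : LinearIndependent K a) :
    Surjective fun (f : X → K) i => Finsupp.linearCombination K f (a i) := by
  intro g
  obtain ⟨S, hS⟩ := (Finsupp.linearCombination K a).exists_leftInverse_of_injective
    (LinearMap.ker_eq_bot.2 ha)
  set φ := Finsupp.linearCombination K g ∘ₗ S
  have hφ : Finsupp.linearCombination K (fun y => φ (Finsupp.single y 1)) = φ :=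
    Finsupp.lhom_ext' fun y => LinearMap.ext_ring (by simp)
  refine ⟨fun y => φ (Finsupp.single y 1), funext fun i => ?_⟩
  beta_reduce
  have hai : a i = Finsupp.linearCombination K a (Finsupp.single i 1) := by simp
  rw [hφ, hai, LinearMap.comp_apply, ← LinearMap.comp_apply S, hS]
  simp

def QFormNonneg (b : X → X → ℝ) (P : X → ℝ) : Prop :=
  ∀ f : X → ℂ, {x | f x ≠ 0}.Finite → 0 ≤ qForm b P f

theorem QFormNonneg.qForm_ofReal_nonneg {P : X → ℝ} (h : QFormNonneg b P) {u : X → ℝ}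
    (hu : HasFiniteSupport u) : 0 ≤ qForm b P (Complex.ofReal ∘ u) :=
  h _ (hu.subset fun x hx => by simpa using hx)

noncomputable def schroedinger (b : X → X → ℝ) (P : X → ℝ) (u : X → ℝ) (x : X) : ℝ :=
  ∑ᶠ y, b x y * (u x - u y) + P x * u x

noncomputable def qFormOn (b : X → X → ℝ) (P : X → ℝ) (T : Finset X) (u : X → ℝ) : ℝ :=
  (1 / 2) * ∑ x ∈ T, ∑ y ∈ T, b x y * (u x - u y) ^ 2 + ∑ x ∈ T, P x * u x ^ 2

def ContainsNbhd (b : X → X → ℝ) (S : Set X) (T : Finset X) : Prop :=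
  ∀ x ∈ S, x ∈ T ∧ ∀ y, b x y ≠ 0 → y ∈ T

theorem ContainsNbhd.mono {S S' : Set X} {T : Finset X} (h : ContainsNbhd b S T) (hS : S' ⊆ S) :
    ContainsNbhd b S' T :=
  fun x hx => h x (hS hx)

theorem exists_containsNbhd (hlf : ∀ x, {y | b x y ≠ 0}.Finite) {S : Set X} (hS : S.Finite) :
    ∃ T : Finset X, ContainsNbhd b S T := by
  classical
  refine ⟨hS.toFinset ∪ hS.toFinset.biUnion fun x => (hlf x).toFinset,
    fun x hx => ⟨by simp [hx], fun y hy => ?_⟩⟩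
  simp only [mem_union, mem_biUnion, Set.Finite.mem_toFinset]
  exact Or.inr ⟨x, hx, hy⟩

theorem degree_eq_sum {S : Set X} {T : Finset X} (hT : ContainsNbhd b S T) {x : X} (hx : x ∈ S) :
    degree b x = ∑ y ∈ T, b x y :=
  tsum_eq_sum fun y hy => not_ne_iff.1 fun h => hy ((hT x hx).2 y h)

theorem schroedinger_eq_sum {P : X → ℝ} {S : Set X} {T : Finset X} (hT : ContainsNbhd b S T)
    (u : X → ℝ) {x : X} (hx : x ∈ S) :
    schroedinger b P u x = ∑ y ∈ T, b x y * (u x - u y) + P x * u x := by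
  rw [schroedinger, finsum_eq_sum_of_support_subset]
  exact fun y hy => (hT x hx).2 y (left_ne_zero_of_mul hy)

theorem finsum_mul_schroedinger_eq_sum {P : X → ℝ} {T : Finset X} {v : X → ℝ}
    (hT : ContainsNbhd b (support v) T) (u : X → ℝ) :
    ∑ᶠ x, v x * schroedinger b P u x =
      ∑ x ∈ T, v x * (∑ y ∈ T, b x y * (u x - u y) + P x * u x) := by
  rw [finsum_eq_sum_of_support_subset _ fun x hx => (hT x (left_ne_zero_of_mul hx)).1]
  refine sum_congr rfl fun x _ => ?_
  by_cases hvx : v x = 0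
  · simp [hvx]
  · rw [schroedinger_eq_sum hT u hvx]

theorem schroedinger_lt_zero (hbnn : ∀ x y, 0 ≤ b x y) (hlf : ∀ x, {y | b x y ≠ 0}.Finite)
    {P w : X → ℝ} (hw : 0 ≤ w) {x₀ z : X} (hx₀ : w x₀ = 0) (hz : 0 < w z) (hb : 0 < b x₀ z) :
    schroedinger b P w x₀ < 0 := by
  obtain ⟨T, hT⟩ := exists_containsNbhd hlf (Set.finite_singleton x₀)
  have hpos : 0 < ∑ y ∈ T, b x₀ y * w y :=
    sum_pos' (fun y _ => mul_nonneg (hbnn x₀ y) (hw y))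
      ⟨z, (hT x₀ rfl).2 z hb.ne', mul_pos hb hz⟩
  rw [schroedinger_eq_sum hT w rfl]
  simpa [hx₀] using hpos

theorem qFormOn_abs_le (hbnn : ∀ x y, 0 ≤ b x y) (P : X → ℝ) (T : Finset X) (u : X → ℝ) :
    qFormOn b P T |u| ≤ qFormOn b P T u := by
  simp only [qFormOn, Pi.abs_apply, sq_abs]
  gcongr _ * ∑ x ∈ T, ∑ y ∈ T, _ * ?_ + _ with x _ y _
  · exact hbnn x y
  · exact sq_le_sq.2 (by simpa using abs_abs_sub_abs_le_abs_sub (u x) (u y))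

theorem sum_sum_mul_swap (hsym : ∀ x y, b x y = b y x) (T : Finset X) (F : X → X → ℝ) :
    ∑ x ∈ T, ∑ y ∈ T, b x y * F y x = ∑ x ∈ T, ∑ y ∈ T, b x y * F x y := by
  rw [sum_comm]
  exact sum_congr rfl fun x _ => sum_congr rfl fun y _ => by rw [hsym]

theorem sum_sum_mul_sub_mul_sub (hsym : ∀ x y, b x y = b y x) (T : Finset X) (u v : X → ℝ) :
    ∑ x ∈ T, ∑ y ∈ T, b x y * ((u x - u y) * (v x - v y)) =
      2 * ∑ x ∈ T, v x * ∑ y ∈ T, b x y * (u x - u y) := by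
  have hsplit : ∑ x ∈ T, ∑ y ∈ T, b x y * ((u x - u y) * (v x - v y)) =
      ∑ x ∈ T, ∑ y ∈ T, b x y * ((u y - u x) * v y) +
        ∑ x ∈ T, ∑ y ∈ T, b x y * ((u x - u y) * v x) := by
    simp only [← sum_add_distrib]
    exact sum_congr rfl fun x _ => sum_congr rfl fun y _ => by ring
  rw [hsplit, sum_sum_mul_swap hsym T fun x y => (u x - u y) * v x, ← two_mul, mul_sum]
  simp only [mul_sum]
  exact sum_congr rfl fun x _ => sum_congr rfl fun y _ => by ring

theorem qFormOn_eq_sum_mul (hsym : ∀ x y, b x y = b y x) (P : X → ℝ) (T : Finset X)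
    (u : X → ℝ) :
    qFormOn b P T u = ∑ x ∈ T, u x * (∑ y ∈ T, b x y * (u x - u y) + P x * u x) := by
  have hgreen := sum_sum_mul_sub_mul_sub hsym T u u
  simp only [← sq] at hgreen
  rw [qFormOn, hgreen, ← mul_assoc, one_div_mul_cancel two_ne_zero, one_mul, ← sum_add_distrib]
  exact sum_congr rfl fun x _ => by ring

theorem qFormOn_add_smul (hsym : ∀ x y, b x y = b y x) (P : X → ℝ) (T : Finset X)
    (u v : X → ℝ) (t : ℝ) :
    qFormOn b P T (u + t • v) = qFormOn b P T u +
      2 * t * ∑ x ∈ T, v x * (∑ y ∈ T, b x y * (u x - u y) + P x * u x) +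
      t ^ 2 * qFormOn b P T v := by
  have hkin : ∑ x ∈ T, ∑ y ∈ T, b x y * ((u + t • v) x - (u + t • v) y) ^ 2 =
      ∑ x ∈ T, ∑ y ∈ T, b x y * (u x - u y) ^ 2 +
        2 * t * ∑ x ∈ T, ∑ y ∈ T, b x y * ((u x - u y) * (v x - v y)) +
        t ^ 2 * ∑ x ∈ T, ∑ y ∈ T, b x y * (v x - v y) ^ 2 := by
    simp only [mul_sum, ← sum_add_distrib]
    refine sum_congr rfl fun x _ => sum_congr rfl fun y _ => ?_
    simp only [Pi.add_apply, Pi.smul_apply, smul_eq_mul]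
    ring
  have hpot : ∑ x ∈ T, P x * (u + t • v) x ^ 2 = ∑ x ∈ T, P x * u x ^ 2 +
      2 * t * ∑ x ∈ T, P x * (u x * v x) + t ^ 2 * ∑ x ∈ T, P x * v x ^ 2 := by
    simp only [mul_sum, ← sum_add_distrib]
    exact sum_congr rfl fun x _ => by simp only [Pi.add_apply, Pi.smul_apply, smul_eq_mul]; ring
  have hmix : ∑ x ∈ T, v x * (∑ y ∈ T, b x y * (u x - u y) + P x * u x) =
      ∑ x ∈ T, v x * ∑ y ∈ T, b x y * (u x - u y) + ∑ x ∈ T, P x * (u x * v x) := by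
    rw [← sum_add_distrib]
    exact sum_congr rfl fun x _ => by ring
  rw [qFormOn, qFormOn, qFormOn, hkin, hpot, sum_sum_mul_sub_mul_sub hsym, hmix]
  ring

theorem qFormOn_neg_sub_two_degree (hsym : ∀ x y, b x y = b y x) (P : X → ℝ) {T : Finset X}
    {w : X → ℝ} (hT : ContainsNbhd b (support w) T) :
    qFormOn b (fun x => -P x - 2 * degree b x) T w =
      -((1 / 2) * ∑ x ∈ T, ∑ y ∈ T, b x y * (w x + w y) ^ 2 + ∑ x ∈ T, P x * w x ^ 2) := by
  have hpot : ∑ x ∈ T, (-P x - 2 * degree b x) * w x ^ 2 =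
      -∑ x ∈ T, P x * w x ^ 2 - 2 * ∑ x ∈ T, ∑ y ∈ T, b x y * w x ^ 2 := by
    rw [mul_sum, ← sum_neg_distrib, ← sum_sub_distrib]
    refine sum_congr rfl fun x _ => ?_
    by_cases hwx : w x = 0
    · simp [hwx]
    · rw [degree_eq_sum hT hwx, ← sum_mul]
      ring
  have hkin : ∑ x ∈ T, ∑ y ∈ T, b x y * (w x - w y) ^ 2 =
      2 * ∑ x ∈ T, ∑ y ∈ T, b x y * w x ^ 2 + 2 * ∑ x ∈ T, ∑ y ∈ T, b x y * w y ^ 2 -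
        ∑ x ∈ T, ∑ y ∈ T, b x y * (w x + w y) ^ 2 := by
    simp only [mul_sum, ← sum_add_distrib, ← sum_sub_distrib]
    exact sum_congr rfl fun x _ => sum_congr rfl fun y _ => by ring
  have hswap := sum_sum_mul_swap hsym T fun x _ => w x ^ 2
  rw [qFormOn, hpot, hkin]
  linarith

theorem qForm_ofReal_eq_qFormOn (hsym : ∀ x y, b x y = b y x) (P : X → ℝ) {T : Finset X}
    {u : X → ℝ} (hT : ContainsNbhd b (support u) T) :
    qForm b P (Complex.ofReal ∘ u) = qFormOn b P T u := by
  have hnorm (r : ℝ) : ‖(r : ℂ)‖ ^ 2 = r ^ 2 := by rw [Complex.norm_real, Real.norm_eq_abs, sq_abs]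
  have hout {x} (hx : x ∉ T) : u x = 0 := not_ne_iff.1 fun h => hx (hT x h).1
  have hinner {x} (hx : x ∈ T) :
      ∑' y, b x y * (u x - u y) ^ 2 = ∑ y ∈ T, b x y * (u x - u y) ^ 2 := by
    refine tsum_eq_sum fun y hy => ?_
    by_cases hux : u x = 0
    · simp [hux, hout hy]
    · simp [not_ne_iff.1 fun h => hy ((hT x hux).2 y h)]
  have houter {x} (hx : x ∉ T) : ∑' y, b x y * (u x - u y) ^ 2 = 0 := by
    refine (tsum_congr fun y => ?_).trans tsum_zero
    by_cases huy : u y = 0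
    · simp [hout hx, huy]
    · simp [hsym x y, not_ne_iff.1 fun h => hx ((hT y huy).2 x h)]
  simp only [qForm, qFormOn, comp_apply, ← Complex.ofReal_sub, hnorm]
  rw [tsum_eq_sum fun x hx => houter hx, sum_congr rfl fun x hx => hinner hx,
    tsum_eq_sum fun x hx => by simp [hout hx]]

theorem qForm_ofReal_eq_finsum_mul_schroedinger (hsym : ∀ x y, b x y = b y x)
    (hlf : ∀ x, {y | b x y ≠ 0}.Finite) (P : X → ℝ) {u : X → ℝ} (hu : HasFiniteSupport u) :
    qForm b P (Complex.ofReal ∘ u) = ∑ᶠ x, u x * schroedinger b P u x := by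
  obtain ⟨T, hT⟩ := exists_containsNbhd hlf hu
  rw [qForm_ofReal_eq_qFormOn hsym P hT, qFormOn_eq_sum_mul hsym, finsum_mul_schroedinger_eq_sum hT]

theorem qForm_ofReal_add_smul (hsym : ∀ x y, b x y = b y x) (hlf : ∀ x, {y | b x y ≠ 0}.Finite)
    (P : X → ℝ) {u v : X → ℝ} (hu : HasFiniteSupport u) (hv : HasFiniteSupport v) (t : ℝ) :
    qForm b P (Complex.ofReal ∘ (u + t • v)) = qForm b P (Complex.ofReal ∘ u) +
      2 * t * ∑ᶠ x, v x * schroedinger b P u x + t ^ 2 * qForm b P (Complex.ofReal ∘ v) := by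
  obtain ⟨T, hT⟩ := exists_containsNbhd hlf (hu.union hv)
  have hsupp : support (u + t • v) ⊆ support u ∪ support v :=
    (support_add u (t • v)).trans (Set.union_subset_union_right _ (support_const_smul_subset t v))
  rw [qForm_ofReal_eq_qFormOn hsym P (hT.mono hsupp),
    qForm_ofReal_eq_qFormOn hsym P (hT.mono Set.subset_union_left),
    qForm_ofReal_eq_qFormOn hsym P (hT.mono Set.subset_union_right),
    finsum_mul_schroedinger_eq_sum (hT.mono Set.subset_union_right), qFormOn_add_smul hsym]

/-- Otherwise perturbing `w` by a small multiple of the delta function at `x₀` would make the form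
negative. -/
theorem schroedinger_eq_zero_of_qForm_eq_zero (hsym : ∀ x y, b x y = b y x)
    (hlf : ∀ x, {y | b x y ≠ 0}.Finite) {P : X → ℝ} (hP : QFormNonneg b P) {w : X → ℝ}
    (hw : HasFiniteSupport w) (h0 : qForm b P (Complex.ofReal ∘ w) = 0) (x₀ : X) :
    schroedinger b P w x₀ = 0 := by
  classical
  set δ : X → ℝ := Pi.single x₀ 1
  have hδ : HasFiniteSupport δ := (Set.finite_singleton x₀).subset Pi.support_single_subset
  have hpair : ∑ᶠ x, δ x * schroedinger b P w x = schroedinger b P w x₀ := by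
    rw [finsum_eq_single _ x₀ fun x hx => by simp [δ, hx]]
    simp [δ]
  have hquad (t : ℝ) :
      0 ≤ qForm b P (Complex.ofReal ∘ δ) * (t * t) + 2 * schroedinger b P w x₀ * t + 0 := by
    have := hP.qForm_ofReal_nonneg (u := w + t • δ) (by fun_prop)
    rw [qForm_ofReal_add_smul hsym hlf P hw hδ, h0, hpair] at this
    linarith
  have := discrim_le_zero hquad
  rw [discrim] at this
  nlinarith [sq_nonneg (schroedinger b P w x₀)]

theorem qForm_ofReal_abs_le (hbnn : ∀ x y, 0 ≤ b x y) (hsym : ∀ x y, b x y = b y x)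
    (hlf : ∀ x, {y | b x y ≠ 0}.Finite) (P : X → ℝ) {u : X → ℝ} (hu : HasFiniteSupport u) :
    qForm b P (Complex.ofReal ∘ |u|) ≤ qForm b P (Complex.ofReal ∘ u) := by
  obtain ⟨T, hT⟩ := exists_containsNbhd hlf hu
  rw [qForm_ofReal_eq_qFormOn hsym P hT,
    qForm_ofReal_eq_qFormOn hsym P (hT.mono (support_abs u).le)]
  exact qFormOn_abs_le hbnn P T u

theorem qForm_neg_sub_two_degree_abs_le (hbnn : ∀ x y, 0 ≤ b x y) (hsym : ∀ x y, b x y = b y x)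
    (hlf : ∀ x, {y | b x y ≠ 0}.Finite) (P : X → ℝ) {u : X → ℝ} (hu : HasFiniteSupport u) :
    qForm b (fun x => -P x - 2 * degree b x) (Complex.ofReal ∘ |u|) ≤
      -qForm b P (Complex.ofReal ∘ u) := by
  obtain ⟨T, hT⟩ := exists_containsNbhd hlf hu
  have hT' : ContainsNbhd b (support |u|) T := hT.mono (support_abs u).le
  rw [qForm_ofReal_eq_qFormOn hsym _ hT', qForm_ofReal_eq_qFormOn hsym P hT,
    qFormOn_neg_sub_two_degree hsym P hT', qFormOn]
  simp only [Pi.abs_apply, sq_abs, neg_le_neg_iff, add_le_add_iff_right]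
  gcongr _ * ∑ x ∈ T, ∑ y ∈ T, _ * ?_ with x _ y _
  · exact hbnn x y
  · exact sq_le_sq.2 ((abs_sub (u x) (u y)).trans (le_abs_self _))

theorem exists_qFormNonneg_qForm_abs_eq_zero (hbnn : ∀ x y, 0 ≤ b x y)
    (hsym : ∀ x y, b x y = b y x) (hlf : ∀ x, {y | b x y ≠ 0}.Finite) {V : X → ℝ}
    (hq : QFormNonneg b V ∨ QFormNonneg b (fun x => -V x - 2 * degree b x)) {u : X → ℝ}
    (hu : HasFiniteSupport u) (h0 : qForm b V (Complex.ofReal ∘ u) = 0) :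
    ∃ P, QFormNonneg b P ∧ qForm b P (Complex.ofReal ∘ |u|) = 0 := by
  have hu' : HasFiniteSupport |u| := hu.subset (support_abs u).le
  rcases hq with hV | hV
  · exact ⟨V, hV, le_antisymm (h0 ▸ qForm_ofReal_abs_le hbnn hsym hlf V hu)
      (hV.qForm_ofReal_nonneg hu')⟩
  · refine ⟨_, hV, le_antisymm ?_ (hV.qForm_ofReal_nonneg hu')⟩
    simpa [h0] using qForm_neg_sub_two_degree_abs_le hbnn hsym hlf V hu

theorem eq_zero_of_qForm_ofReal_eq_zero (hbnn : ∀ x y, 0 ≤ b x y) (hsym : ∀ x y, b x y = b y x)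
    (hlf : ∀ x, {y | b x y ≠ 0}.Finite)
    (hinfcomp : ∀ x, {y | Relation.ReflTransGen (fun u v => 0 < b u v) x y}.Infinite)
    {V : X → ℝ} (hq : QFormNonneg b V ∨ QFormNonneg b (fun x => -V x - 2 * degree b x))
    {u : X → ℝ} (hu : HasFiniteSupport u) (h0 : qForm b V (Complex.ofReal ∘ u) = 0) : u = 0 := by
  by_contra hne
  obtain ⟨z₀, hz₀⟩ := Function.ne_iff.1 hne
  obtain ⟨c, hc, hcu⟩ := ((hinfcomp z₀).sdiff hu).nonempty
  obtain ⟨z, hz, x₀, hx₀, hzx₀⟩ := hc.exists_rel_mem_not_mem (S := support u) hz₀ hcu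
  obtain ⟨P, hP, hP0⟩ := exists_qFormNonneg_qForm_abs_eq_zero hbnn hsym hlf hq hu h0
  have hharmonic := schroedinger_eq_zero_of_qForm_eq_zero hsym hlf hP
    (hu.subset (support_abs u).le) hP0 x₀
  have hneg : schroedinger b P |u| x₀ < 0 :=
    schroedinger_lt_zero hbnn hlf (abs_nonneg u) (by simpa using hx₀) (abs_pos.2 hz)
      (hsym z x₀ ▸ hzx₀)
  exact hneg.ne hharmonic

noncomputable def schroedingerRow (b : X → X → ℝ) (V : X → ℝ) (N : X → Finset X) (x : X) :
    X →₀ ℝ :=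
  ∑ y ∈ N x, b x y • (Finsupp.single x 1 - Finsupp.single y 1) + V x • Finsupp.single x 1

theorem linearCombination_schroedingerRow {V : X → ℝ} {N : X → Finset X}
    (hN : ∀ x y, b x y ≠ 0 → y ∈ N x) (f : X → ℝ) (x : X) :
    Finsupp.linearCombination ℝ f (schroedingerRow b V N x) = schroedinger b V f x := by
  rw [schroedinger, finsum_eq_sum_of_support_subset _ fun y hy => hN x y (left_ne_zero_of_mul hy)]
  simp [schroedingerRow, mul_comm]

theorem linearIndependent_schroedingerRow (hsym : ∀ x y, b x y = b y x)
    (hlf : ∀ x, {y | b x y ≠ 0}.Finite) {V : X → ℝ} {N : X → Finset X}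
    (hN : ∀ x y, b x y ≠ 0 → y ∈ N x)
    (hdef : ∀ u : X → ℝ, HasFiniteSupport u → qForm b V (Complex.ofReal ∘ u) = 0 → u = 0) :
    LinearIndependent ℝ (schroedingerRow b V N) := by
  refine linearIndependent_iff.2 fun p hp => DFunLike.coe_injective (hdef p p.hasFiniteSupport ?_)
  have hpair := congrArg (Finsupp.linearCombination ℝ p) hp
  rw [Finsupp.apply_linearCombination, map_zero, Finsupp.linearCombination_apply] at hpair
  rw [qForm_ofReal_eq_finsum_mul_schroedinger hsym hlf V p.hasFiniteSupport, ← hpair, Finsupp.sum,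
    finsum_eq_sum_of_support_subset (s := p.support) _
      fun x hx => Finsupp.mem_support_iff.2 (left_ne_zero_of_mul hx)]
  simp [linearCombination_schroedingerRow hN]

theorem surjective_schroedinger (hbnn : ∀ x y, 0 ≤ b x y) (hsym : ∀ x y, b x y = b y x)
    (hlf : ∀ x, {y | b x y ≠ 0}.Finite)
    (hinfcomp : ∀ x, {y | Relation.ReflTransGen (fun u v => 0 < b u v) x y}.Infinite)
    {V : X → ℝ} (hq : QFormNonneg b V ∨ QFormNonneg b (fun x => -V x - 2 * degree b x)) :
    Surjective (schroedinger b V) := by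
  have hN (x y : X) (h : b x y ≠ 0) : y ∈ (hlf x).toFinset := (hlf x).mem_toFinset.2 h
  have hli := linearIndependent_schroedingerRow hsym hlf hN
    fun u hu => eq_zero_of_qForm_ofReal_eq_zero hbnn hsym hlf hinfcomp hq hu
  intro g
  obtain ⟨f, hf⟩ := surjective_linearCombination_of_linearIndependent hli g
  exact ⟨f, funext fun x => (linearCombination_schroedingerRow hN f x).symm.trans (congrFun hf x)⟩

theorem complex_schroedinger_add_mul_I (hlf : ∀ x, {y | b x y ≠ 0}.Finite) (V : X → ℝ)
    (f₁ f₂ : X → ℝ) (x : X) :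
    (∑ᶠ y, (b x y : ℂ) * ((f₁ x + f₂ x * Complex.I) - (f₁ y + f₂ y * Complex.I))) +
        (V x : ℂ) * (f₁ x + f₂ x * Complex.I) =
      schroedinger b V f₁ x + schroedinger b V f₂ x * Complex.I := by
  have hN {M : Type} [AddCommMonoid M] (F : X → M) (hF : ∀ y, b x y = 0 → F y = 0) :
      ∑ᶠ y, F y = ∑ y ∈ (hlf x).toFinset, F y :=
    finsum_eq_sum_of_support_subset F fun y hy => (hlf x).mem_toFinset.2 fun h => hy (hF y h)
  rw [schroedinger, schroedinger, hN, hN, hN]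
  · push_cast
    have hsum : ∑ y ∈ (hlf x).toFinset,
          (b x y : ℂ) * ((f₁ x + f₂ x * Complex.I) - (f₁ y + f₂ y * Complex.I)) =
        ∑ y ∈ (hlf x).toFinset, (b x y : ℂ) * (f₁ x - f₁ y) +
          (∑ y ∈ (hlf x).toFinset, (b x y : ℂ) * (f₂ x - f₂ y)) * Complex.I := by
      rw [sum_mul, ← sum_add_distrib]
      exact sum_congr rfl fun y _ => by ring
    linear_combination hsum
  all_goals intro y h; simp [h]

end

theorem schroedinger_surjective_general
    {X : Type*}
    (b : X → X → ℝ)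
    (hbnn : ∀ x y, 0 ≤ b x y)
    (hsym : ∀ x y, b x y = b y x)
    (hlf : ∀ x, {y | b x y ≠ 0}.Finite)
    (hinfcomp : ∀ x, {y | Relation.ReflTransGen (fun u v => 0 < b u v) x y}.Infinite)
    (V : X → ℝ)
    (hq : (∀ f : X → ℂ, {x | f x ≠ 0}.Finite → 0 ≤ qForm b V f) ∨
      (∀ f : X → ℂ, {x | f x ≠ 0}.Finite →
        0 ≤ qForm b (fun x => -V x - 2 * degree b x) f)) :
    Function.Surjective (fun (f : X → ℂ) (x : X) =>
      (∑ᶠ y, (b x y : ℂ) * (f x - f y)) + (V x : ℂ) * f x) := by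
  intro g
  obtain ⟨f₁, hf₁⟩ := surjective_schroedinger hbnn hsym hlf hinfcomp hq fun x => (g x).re
  obtain ⟨f₂, hf₂⟩ := surjective_schroedinger hbnn hsym hlf hinfcomp hq fun x => (g x).im
  refine ⟨fun y => f₁ y + f₂ y * Complex.I, funext fun x => ?_⟩
  beta_reduce
  rw [complex_schroedinger_add_mul_I hlf V f₁ f₂ x, hf₁, hf₂]
  exact Complex.re_add_im (g x)

/-- **Surjectivity of discrete Schrödinger operators.**
Let `(X,b)` be a locally finite weighted graph all of whose connected components are infinite
and let `V : X → ℝ` be a potential such that the quadratic form `q_V` is nonnegative on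
`C_c(X)` or the quadratic form `q_{-V-2deg}` is nonnegative on `C_c(X)`.  Then the
Schrödinger operator `L_V f x = ∑_y b(x,y)(f x - f y) + V x · f x` is surjective on `C(X)`. -/
theorem schroedinger_surjective
    {X : Type*} [Countable X]
    (b : X → X → ℝ)
    (hb0 : ∀ x, b x x = 0)
    (hbnn : ∀ x y, 0 ≤ b x y)
    (hsym : ∀ x y, b x y = b y x)
    (hlf : ∀ x, {y | b x y ≠ 0}.Finite)
    (hinfcomp : ∀ x, {y | Relation.ReflTransGen (fun u v => 0 < b u v) x y}.Infinite)
    (V : X → ℝ)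
    (hq : (∀ f : X → ℂ, {x | f x ≠ 0}.Finite → 0 ≤ qForm b V f) ∨
      (∀ f : X → ℂ, {x | f x ≠ 0}.Finite →
        0 ≤ qForm b (fun x => -V x - 2 * degree b x) f)) :
    Function.Surjective (fun (f : X → ℂ) (x : X) =>
      (∑ᶠ y, (b x y : ℂ) * (f x - f y)) + (V x : ℂ) * f x) :=
  schroedinger_surjective_general b hbnn hsym hlf hinfcomp V hq
end

section
/- Let (X,b) be a locally finite weighted graph, F = (F_x)_{x∈X} a family of finite-dimensional complex inner product spaces, Φ a unitary connection on F with Φ_{yx} = Φ_{xy}^{-1}, and W a family of self-adjoint maps W(x) : F_x → F_x with smallest eigenvalue W_min(x). Let M be the associated magnetic Schrödinger operator and L_{W_min} the scalar Schrödinger operator with potential W_min. Then for every finitely supported vector field φ ∈ Γ_c(X;F) one has (φ, Mφ) ≥ q_{W_min}(|φ|), where (φ,ψ) = ∑_{x∈X} ⟨φ(x),ψ(x)⟩_x and |φ|(x) = ‖φ(x)‖_x. -/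
/-!
Kato's inequality on each edge: as `Φ` is unitary, `Re ⟨φ x, Φ x y (φ y)⟩ ≤ ‖φ x‖ ‖φ y‖`, so the two
half-edge terms `b x y Re ⟨φ x, φ x - Φ x y (φ y)⟩ + b y x Re ⟨φ y, φ y - Φ y x (φ x)⟩` dominate
`b x y (‖φ x‖ - ‖φ y‖)²`; summing over ordered pairs with `b` symmetric gives the kinetic part.
The potential part is the Rayleigh bound `W_min x ‖v‖² ≤ Re ⟨v, W x v⟩`, read off from an
orthonormal eigenbasis of `W x`. All sums are finite since `φ` has finite support and `b` is locally
finite.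
-/

open Finset RCLike Module.End

open scoped InnerProductSpace

theorem LinearMap.IsSymmetric.mul_norm_sq_le_re_inner_map_self {𝕜 E : Type*} [RCLike 𝕜]
    [NormedAddCommGroup E] [InnerProductSpace 𝕜 E] [FiniteDimensional 𝕜 E] {T : E →ₗ[𝕜] E}
    (hT : T.IsSymmetric) {c : ℝ} (hc : ∀ μ : ℝ, HasEigenvalue T μ → c ≤ μ) (v : E) :
    c * ‖v‖ ^ 2 ≤ re ⟪v, T v⟫_𝕜 := by
  let e := hT.eigenvectorBasis rfl
  have hexpand : re ⟪v, T v⟫_𝕜 = ∑ i, hT.eigenvalues rfl i * ‖⟪e i, v⟫_𝕜‖ ^ 2 := by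
    rw [← e.sum_inner_mul_inner v (T v), map_sum]
    refine sum_congr rfl fun i _ => ?_
    rw [← hT (e i) v, hT.apply_eigenvectorBasis, inner_smul_left, conj_ofReal,
      ← inner_conj_symm, mul_left_comm, RCLike.conj_mul]
    norm_cast
  rw [hexpand, ← e.sum_sq_norm_inner_right v, mul_sum]
  exact sum_le_sum fun i _ =>
    mul_le_mul_of_nonneg_right (hc _ (hT.hasEigenvalue_eigenvalues rfl i)) (sq_nonneg _)

theorem sq_norm_sub_norm_le_re_inner_sub_add {𝕜 E E' : Type*} [RCLike 𝕜]
    [NormedAddCommGroup E] [InnerProductSpace 𝕜 E] [NormedAddCommGroup E'] [InnerProductSpace 𝕜 E']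
    {u u' : E} {w w' : E'} (hu' : ‖u'‖ = ‖w‖) (hw' : ‖w'‖ = ‖u‖) :
    (‖u‖ - ‖w‖) ^ 2 ≤ re ⟪u, u - u'⟫_𝕜 + re ⟪w, w - w'⟫_𝕜 := by
  have hu := re_inner_le_norm (𝕜 := 𝕜) u u'
  have hw := re_inner_le_norm (𝕜 := 𝕜) w w'
  rw [hu'] at hu
  rw [hw'] at hw
  simp only [inner_sub_right, map_sub, inner_self_eq_norm_sq]
  nlinarith

theorem Finset.sum_sum_le_two_mul_sum_sum {ι : Type*} (s : Finset ι) {a g : ι → ι → ℝ}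
    (h : ∀ x y, a x y ≤ g x y + g y x) :
    ∑ x ∈ s, ∑ y ∈ s, a x y ≤ 2 * ∑ x ∈ s, ∑ y ∈ s, g x y :=
  calc ∑ x ∈ s, ∑ y ∈ s, a x y ≤ ∑ x ∈ s, ∑ y ∈ s, (g x y + g y x) :=
        sum_le_sum fun x _ => sum_le_sum fun y _ => h x y
    _ = 2 * ∑ x ∈ s, ∑ y ∈ s, g x y := by
        rw [sum_congr rfl fun x _ => sum_add_distrib, sum_add_distrib,
          sum_comm (f := fun x y => g y x)]
        ring

section WeightedGraph

variable {X : Type*} {b : X → X → ℝ}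

theorem exists_finset_forall_mem_and_adj_mem (hlf : ∀ x, {y | b x y ≠ 0}.Finite) {S : Set X}
    (hS : S.Finite) : ∃ s : Finset X, ∀ x ∈ S, x ∈ s ∧ ∀ y, b x y ≠ 0 → y ∈ s := by
  refine ⟨(hS.union (hS.biUnion fun x _ => hlf x)).toFinset, fun x hx => ?_⟩
  simp only [Set.Finite.mem_toFinset]
  exact ⟨Or.inl hx, fun y hy => Or.inr (Set.mem_biUnion hx hy)⟩

theorem qForm_eq_sum (hsym : ∀ x y, b x y = b y x) (V : X → ℝ) {f : X → ℂ} {s : Finset X}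
    (hs : ∀ x, f x ≠ 0 → x ∈ s ∧ ∀ y, b x y ≠ 0 → y ∈ s) :
    qForm b V f = 1 / 2 * ∑ x ∈ s, ∑ y ∈ s, b x y * ‖f x - f y‖ ^ 2 +
      ∑ x ∈ s, V x * ‖f x‖ ^ 2 := by
  have hedge : ∀ x y, x ∉ s ∨ y ∉ s → b x y * ‖f x - f y‖ ^ 2 = 0 := by
    intro x y hxy
    by_contra hne
    have hb : b x y ≠ 0 := left_ne_zero_of_mul hne
    by_cases hx : f x = 0
    · have hy : f y ≠ 0 := fun hy => hne (by simp [hx, hy])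
      exact hxy.elim (· ((hs y hy).2 x (hsym x y ▸ hb))) (· (hs y hy).1)
    · exact hxy.elim (· (hs x hx).1) (· ((hs x hx).2 y hb))
  have hvertex : ∀ x ∉ s, V x * ‖f x‖ ^ 2 = 0 := fun x hx => by
    by_cases h : f x = 0
    · simp [h]
    · exact absurd (hs x h).1 hx
  rw [qForm, tsum_eq_sum hvertex, tsum_congr fun x => tsum_eq_sum fun y hy => hedge x y (.inr hy),
    tsum_eq_sum fun x hx => sum_eq_zero fun y _ => hedge x y (.inl hx)]

theorem finsum_re_inner_magnetic_eq_sum {F : X → Type*} [∀ x, NormedAddCommGroup (F x)]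
    [∀ x, InnerProductSpace ℂ (F x)] (Φ : ∀ x y, F y → F x) (W : ∀ x, F x → F x)
    {φ : ∀ x, F x} {s : Finset X} (hs : ∀ x, φ x ≠ 0 → x ∈ s ∧ ∀ y, b x y ≠ 0 → y ∈ s) :
    ∑ᶠ x, (⟪φ x, (∑ᶠ y, b x y • (φ x - Φ x y (φ y))) + W x (φ x)⟫_ℂ).re =
      ∑ x ∈ s, (∑ y ∈ s, b x y * (⟪φ x, φ x - Φ x y (φ y)⟫_ℂ).re + (⟪φ x, W x (φ x)⟫_ℂ).re) := by
  rw [finsum_eq_sum_of_support_subset _ fun x hx => (hs x fun h => hx (by simp [h])).1]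
  refine sum_congr rfl fun x _ => ?_
  by_cases hx : φ x = 0
  · simp [hx]
  rw [finsum_eq_sum_of_support_subset _ fun y hy => (hs x hx).2 y fun h => hy (by simp [h]),
    inner_add_right, inner_sum, Complex.add_re, Complex.re_sum]
  simp only [← Complex.coe_smul, inner_smul_right, Complex.re_ofReal_mul]

theorem sum_sum_mul_sq_norm_sub_norm_le {F : X → Type*} [∀ x, NormedAddCommGroup (F x)]
    [∀ x, InnerProductSpace ℂ (F x)] (hbnn : ∀ x y, 0 ≤ b x y) (hsym : ∀ x y, b x y = b y x)
    (Φ : ∀ x y, F y → F x) (hΦ : ∀ x y v, ‖Φ x y v‖ = ‖v‖) (φ : ∀ x, F x) (s : Finset X) :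
    1 / 2 * ∑ x ∈ s, ∑ y ∈ s, b x y * (‖φ x‖ - ‖φ y‖) ^ 2 ≤
      ∑ x ∈ s, ∑ y ∈ s, b x y * (⟪φ x, φ x - Φ x y (φ y)⟫_ℂ).re := by
  have hedge : ∀ x y, b x y * (‖φ x‖ - ‖φ y‖) ^ 2 ≤
      b x y * (⟪φ x, φ x - Φ x y (φ y)⟫_ℂ).re + b y x * (⟪φ y, φ y - Φ y x (φ x)⟫_ℂ).re := by
    intro x y
    rw [hsym y x, ← mul_add]
    exact mul_le_mul_of_nonneg_left
      (sq_norm_sub_norm_le_re_inner_sub_add (𝕜 := ℂ) (hΦ x y (φ y)) (hΦ y x (φ x))) (hbnn x y)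
  linarith [s.sum_sum_le_two_mul_sum_sum hedge]

end WeightedGraph

theorem magnetic_schroedinger_domination_general
    {X : Type*}
    (b : X → X → ℝ)
    (hbnn : ∀ x y, 0 ≤ b x y)
    (hsym : ∀ x y, b x y = b y x)
    (hlf : ∀ x, {y | b x y ≠ 0}.Finite)
    (F : X → Type*) [∀ x, NormedAddCommGroup (F x)] [∀ x, InnerProductSpace ℂ (F x)]
    [∀ x, FiniteDimensional ℂ (F x)]
    (Φ : ∀ x y : X, F y ≃ₗᵢ[ℂ] F x)
    (W : ∀ x, F x →ₗ[ℂ] F x)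
    (hW : ∀ x, ∀ u v : F x, (inner ℂ (W x u) v : ℂ) = inner ℂ u (W x v))
    (Wmin : X → ℝ)
    (hWmin : ∀ x, (∃ v : F x, v ≠ 0 ∧ W x v = (Wmin x : ℂ) • v) ∧
      ∀ μ : ℝ, (∃ v : F x, v ≠ 0 ∧ W x v = (μ : ℂ) • v) → Wmin x ≤ μ)
    (φ : ∀ x, F x) (hφ : {x | φ x ≠ 0}.Finite) :
    qForm b Wmin (fun x => (‖φ x‖ : ℂ)) ≤
      ∑ᶠ x, (inner ℂ (φ x) ((∑ᶠ y, b x y • (φ x - Φ x y (φ y))) + W x (φ x)) : ℂ).re := by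
  obtain ⟨s, hs⟩ := exists_finset_forall_mem_and_adj_mem hlf hφ
  have hpotential : ∀ x, Wmin x * ‖φ x‖ ^ 2 ≤ (⟪φ x, W x (φ x)⟫_ℂ).re := fun x =>
    LinearMap.IsSymmetric.mul_norm_sq_le_re_inner_map_self (hW x) (v := φ x) fun μ hμ =>
      let ⟨v, hv⟩ := hμ.exists_hasEigenvector
      (hWmin x).2 μ ⟨v, hv.2, hv.apply_eq_smul⟩
  rw [qForm_eq_sum hsym Wmin fun x hx => hs x fun h => hx (by simp [h]),
    finsum_re_inner_magnetic_eq_sum (fun x y => Φ x y) (fun x => W x) hs, sum_add_distrib]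
  simp only [← Complex.ofReal_sub, Complex.norm_real, Real.norm_eq_abs, sq_abs, abs_norm]
  exact add_le_add
    (sum_sum_mul_sq_norm_sub_norm_le hbnn hsym (fun x y => Φ x y) (fun x y => (Φ x y).norm_map) φ s)
    (sum_le_sum fun x _ => hpotential x)

/-- **Domination (Kato's inequality plus Green's formula).**
Let `(X,b)` be a locally finite weighted graph, `F` a Hermitian vector bundle with
finite-dimensional fibers, `Φ` a unitary connection with `Φ_{yx} = Φ_{xy}⁻¹`, and `W` a
self-adjoint bundle endomorphism whose smallest eigenvalue on the fiber over `x` is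
`W_min x`.  Then for every finitely supported vector field `φ` we have
`(φ, Mφ) ≥ q_{W_min}(|φ|)`, where `M` is the magnetic Schrödinger operator,
`(φ,ψ) = ∑_x ⟨φ x, ψ x⟩` and `|φ| x = ‖φ x‖`. -/
theorem magnetic_schroedinger_domination
    {X : Type*} [Countable X]
    (b : X → X → ℝ)
    (hb0 : ∀ x, b x x = 0)
    (hbnn : ∀ x y, 0 ≤ b x y)
    (hsym : ∀ x y, b x y = b y x)
    (hlf : ∀ x, {y | b x y ≠ 0}.Finite)
    (F : X → Type*) [∀ x, NormedAddCommGroup (F x)] [∀ x, InnerProductSpace ℂ (F x)]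
    [∀ x, FiniteDimensional ℂ (F x)]
    (Φ : ∀ x y : X, F y ≃ₗᵢ[ℂ] F x)
    (hΦ : ∀ x y : X, (Φ x y).symm = Φ y x)
    (W : ∀ x, F x →ₗ[ℂ] F x)
    (hW : ∀ x, ∀ u v : F x, (inner ℂ (W x u) v : ℂ) = inner ℂ u (W x v))
    (Wmin : X → ℝ)
    (hWmin : ∀ x, (∃ v : F x, v ≠ 0 ∧ W x v = (Wmin x : ℂ) • v) ∧
      ∀ μ : ℝ, (∃ v : F x, v ≠ 0 ∧ W x v = (μ : ℂ) • v) → Wmin x ≤ μ)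
    (φ : ∀ x, F x) (hφ : {x | φ x ≠ 0}.Finite) :
    qForm b Wmin (fun x => (‖φ x‖ : ℂ)) ≤
      ∑ᶠ x, (inner ℂ (φ x) ((∑ᶠ y, b x y • (φ x - Φ x y (φ y))) + W x (φ x)) : ℂ).re :=
  magnetic_schroedinger_domination_general b hbnn hsym hlf F Φ W hW Wmin hWmin φ hφ
end

section
/- Let (X,b) be a locally finite weighted graph, F = (F_x)_{x∈X} a family of finite-dimensional complex inner product spaces, Φ a unitary connection on F with Φ_{yx} = Φ_{xy}^{-1}, and W a family of self-adjoint maps W(x) : F_x → F_x. Then the magnetic Schrödinger operator M : Γ(X;F) → Γ(X;F) is continuous (for the product topology), maps Γ_c(X;F) into Γ_c(X;F), satisfies the symmetry (φ, Mψ) = (Mφ, ψ) for all φ,ψ ∈ Γ_c(X;F) where (φ,ψ) = ∑_{x∈X} ⟨φ(x),ψ(x)⟩_x, and M is surjective if and only if the restriction of M to Γ_c(X;F) is injective. -/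
/-!
Write `M = D - A` with the fibrewise part `D = deg + W` and the transport part
`A f x = ∑ y, b x y • Φ x y (f y)`. By local finiteness every coordinate of `M` is a finite sum
of continuous linear maps, and together with the symmetry of `b` this makes `A` preserve finite
support. `D` is symmetric fibre by fibre; the symmetry of `A` is the exchange of the two sums in
`∑ x, ∑ y, b x y ⟪Φ x y (f y), φ x⟫`, using `(Φ x y)⋆ = (Φ x y)⁻¹ = Φ y x`.

For the duality, `f ↦ (φ ↦ ∑ x, ⟪f x, φ x⟫)` identifies `Γ(X;F)` with the algebraic dual of
`Γ_c(X;F)` (Riesz in each fibre, as `Γ_c` is the direct sum of the fibres), and the symmetry says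
that this identification turns `M` into the transpose of `M|Γ_c`. A linear map between vector
spaces is injective if and only if its transpose is surjective.
-/

open Function
open scoped InnerProductSpace

theorem finsum_comm_of_hasFiniteSupport {α β M : Type*} [AddCommMonoid M] (f : α → β → M)
    (hf : HasFiniteSupport (uncurry f)) : ∑ᶠ a, ∑ᶠ b, f a b = ∑ᶠ b, ∑ᶠ a, f a b := by
  have hswap : HasFiniteSupport (uncurry f ∘ Prod.swap) :=
    hf.preimage Prod.swap_injective.injOn
  have hcurry := finsum_curry _ hf
  have hcurry_swap := finsum_curry _ hswap
  simp only [comp_apply, Prod.swap_prod_mk, uncurry_apply_pair] at hcurry hcurry_swap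
  rw [← hcurry, ← hcurry_swap]
  exact (finsum_comp_equiv (Equiv.prodComm β α)).symm

section FinitelySupported

variable {X : Type*}

def finitelySupported (R : Type*) [Semiring R] (F : X → Type*) [∀ x, AddCommMonoid (F x)]
    [∀ x, Module R (F x)] : Submodule R (∀ x, F x) where
  carrier := {f | {x | f x ≠ 0}.Finite}
  add_mem' hf hg := (hf.union hg).subset fun x hx => by
    by_contra h
    simp_all [not_or]
  zero_mem' := by simp
  smul_mem' c f hf := hf.subset fun x hx h => hx (by simp [h])

variable {F : X → Type*}

section Module

variable {R : Type*} [Semiring R] [∀ x, AddCommMonoid (F x)] [∀ x, Module R (F x)]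

theorem mem_finitelySupported {f : ∀ x, F x} :
    f ∈ finitelySupported R F ↔ {x | f x ≠ 0}.Finite :=
  Iff.rfl

theorem single_mem_finitelySupported [DecidableEq X] (x : X) (v : F x) :
    Pi.single x v ∈ finitelySupported R F :=
  (Set.finite_singleton x).subset fun z hz => by
    by_contra h
    exact hz (Pi.single_eq_of_ne h v)

theorem sum_pi_single_eq_self [DecidableEq X] {f : ∀ x, F x} {s : Finset X}
    (hs : ∀ x, f x ≠ 0 → x ∈ s) : ∑ x ∈ s, Pi.single x (f x) = f := by
  funext z
  rw [Finset.sum_apply, Finset.sum_pi_single]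
  split_ifs with hz
  · rfl
  · by_contra h
    exact hz (hs z (Ne.symm h))

end Module

section Pairing

variable {𝕜 : Type*} [RCLike 𝕜] [∀ x, NormedAddCommGroup (F x)] [∀ x, InnerProductSpace 𝕜 (F x)]

theorem hasFiniteSupport_inner_right (f : ∀ x, F x) {φ : ∀ x, F x}
    (hφ : φ ∈ finitelySupported 𝕜 F) : HasFiniteSupport fun x => ⟪f x, φ x⟫_𝕜 :=
  hφ.subset fun x hx h => hx (by simp [h])

noncomputable def pairingDual (f : ∀ x, F x) : Module.Dual 𝕜 (finitelySupported 𝕜 F) where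
  toFun φ := ∑ᶠ x, ⟪f x, (φ : ∀ x, F x) x⟫_𝕜
  map_add' φ ψ := by
    simp only [Submodule.coe_add, Pi.add_apply, inner_add_right]
    exact finsum_add_distrib (hasFiniteSupport_inner_right f φ.2)
      (hasFiniteSupport_inner_right f ψ.2)
  map_smul' c φ := by
    simp only [Submodule.coe_smul, Pi.smul_apply, inner_smul_right, RingHom.id_apply, smul_eq_mul,
      mul_finsum]

theorem pairingDual_apply (f : ∀ x, F x) (φ : finitelySupported 𝕜 F) :
    pairingDual f φ = ∑ᶠ x, ⟪f x, (φ : ∀ x, F x) x⟫_𝕜 :=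
  rfl

theorem pairingDual_single [DecidableEq X] (f : ∀ x, F x) (x : X) (v : F x) :
    pairingDual f ⟨Pi.single x v, single_mem_finitelySupported x v⟩ = ⟪f x, v⟫_𝕜 := by
  rw [pairingDual_apply, finsum_eq_single _ x fun z hz => by simp [Pi.single_eq_of_ne hz]]
  simp

theorem pairingDual_injective : Injective (pairingDual (𝕜 := 𝕜) (F := F)) := by
  classical
  intro f g h
  funext x
  refine ext_inner_right 𝕜 fun v => ?_
  simpa only [pairingDual_single] using
    LinearMap.congr_fun h ⟨Pi.single x v, single_mem_finitelySupported x v⟩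

theorem pairingDual_surjective [∀ x, FiniteDimensional 𝕜 (F x)] :
    Surjective (pairingDual (𝕜 := 𝕜) (F := F)) := by
  classical
  have (x : X) : CompleteSpace (F x) := FiniteDimensional.complete 𝕜 (F x)
  intro ℓ
  let singleₗ (x : X) : F x →ₗ[𝕜] finitelySupported 𝕜 F :=
    (LinearMap.single 𝕜 F x).codRestrict _ (single_mem_finitelySupported x)
  refine ⟨fun x => (InnerProductSpace.toDual 𝕜 (F x)).symm (ℓ ∘ₗ singleₗ x).toContinuousLinearMap,
    LinearMap.ext fun φ => ?_⟩
  obtain ⟨φ, hφ⟩ := φ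
  have hs : ∀ x, φ x ≠ 0 → x ∈ hφ.toFinset := fun x => hφ.mem_toFinset.2
  have hsum : ∑ x ∈ hφ.toFinset, singleₗ x (φ x) = ⟨φ, hφ⟩ :=
    Subtype.ext <| by rw [Submodule.coe_sum]; exact sum_pi_single_eq_self hs
  rw [pairingDual_apply,
    finsum_eq_sum_of_support_subset _ fun x hx => hs x fun h => hx (by simp [h])]
  simp_rw [InnerProductSpace.toDual_symm_apply]
  rw [← hsum, map_sum]
  rfl

theorem pairingDual_bijective [∀ x, FiniteDimensional 𝕜 (F x)] :
    Bijective (pairingDual (𝕜 := 𝕜) (F := F)) :=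
  ⟨pairingDual_injective, pairingDual_surjective⟩

theorem surjective_iff_injective_on_finitelySupported [∀ x, FiniteDimensional 𝕜 (F x)]
    {T : (∀ x, F x) →ₗ[𝕜] ∀ x, F x}
    (hT : ∀ φ ∈ finitelySupported 𝕜 F, T φ ∈ finitelySupported 𝕜 F)
    (hTsymm : ∀ f, ∀ φ ∈ finitelySupported 𝕜 F, ∑ᶠ x, ⟪T f x, φ x⟫_𝕜 = ∑ᶠ x, ⟪f x, T φ x⟫_𝕜) :
    Surjective T ↔ ∀ φ ∈ finitelySupported 𝕜 F, T φ = 0 → φ = 0 := by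
  have hdual : pairingDual ∘ T = (T.restrict hT).dualMap ∘ pairingDual :=
    funext fun f => LinearMap.ext fun φ => hTsymm f φ φ.2
  rw [← Surjective.of_comp_iff' (pairingDual_bijective (𝕜 := 𝕜)), hdual,
    Surjective.of_comp_iff _ pairingDual_surjective, LinearMap.dualMap_surjective_iff,
    injective_iff_map_eq_zero]
  exact ⟨fun h φ hφ hTφ => congrArg Subtype.val (h ⟨φ, hφ⟩ (Subtype.ext hTφ)),
    fun h φ hTφ => Subtype.ext (h φ φ.2 (congrArg Subtype.val hTφ))⟩

end Pairing

end FinitelySupported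

theorem inner_real_smul_left {E : Type*} [NormedAddCommGroup E] [InnerProductSpace ℂ E]
    (r : ℝ) (u v : E) : ⟪r • u, v⟫_ℂ = r • ⟪u, v⟫_ℂ := by
  rw [← Complex.coe_smul, inner_smul_left, Complex.conj_ofReal, Complex.real_smul]

theorem inner_real_smul_right {E : Type*} [NormedAddCommGroup E] [InnerProductSpace ℂ E]
    (r : ℝ) (u v : E) : ⟪u, r • v⟫_ℂ = r • ⟪u, v⟫_ℂ := by
  rw [← Complex.coe_smul, inner_smul_right, Complex.real_smul]

section MagneticSchrodinger

variable {X : Type*} {F : X → Type*} [∀ x, NormedAddCommGroup (F x)]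
  [∀ x, InnerProductSpace ℂ (F x)]
  (b : X → X → ℝ) (hlf : ∀ x, {y | b x y ≠ 0}.Finite)
  (Φ : ∀ x y : X, F y ≃ₗᵢ[ℂ] F x) (W : ∀ x, F x →ₗ[ℂ] F x)

theorem finsum_smul_eq_sum_toFinset {M : Type*} [AddCommMonoid M] [Module ℝ M] (x : X)
    (g : X → M) : ∑ᶠ y, b x y • g y = ∑ y ∈ (hlf x).toFinset, b x y • g y :=
  finsum_eq_sum_of_support_subset _ fun y hy =>
    (hlf x).mem_toFinset.2 fun h => hy (by simp [h])

noncomputable def magneticAdjacency : (∀ x, F x) →L[ℂ] ∀ x, F x :=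
  .pi fun x => ∑ y ∈ (hlf x).toFinset, b x y • (Φ x y : F y →L[ℂ] F x).comp (.proj y)

noncomputable def magneticDiagonal [∀ x, FiniteDimensional ℂ (F x)] :
    (∀ x, F x) →L[ℂ] ∀ x, F x :=
  .pi fun x => ((∑ᶠ y, b x y) • .id ℂ (F x) + (W x).toContinuousLinearMap).comp (.proj x)

noncomputable def magneticSchrodinger [∀ x, FiniteDimensional ℂ (F x)] :
    (∀ x, F x) →L[ℂ] ∀ x, F x :=
  magneticDiagonal b W - magneticAdjacency b hlf Φ

theorem magneticAdjacency_apply (f : ∀ x, F x) (x : X) :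
    magneticAdjacency b hlf Φ f x = ∑ᶠ y, b x y • Φ x y (f y) := by
  simp [magneticAdjacency, finsum_smul_eq_sum_toFinset b hlf]

theorem magneticDiagonal_apply [∀ x, FiniteDimensional ℂ (F x)] (f : ∀ x, F x) (x : X) :
    magneticDiagonal b W f x = (∑ᶠ y, b x y) • f x + W x (f x) := by
  simp [magneticDiagonal]

theorem magneticSchrodinger_apply [∀ x, FiniteDimensional ℂ (F x)] (f : ∀ x, F x) (x : X) :
    magneticSchrodinger b hlf Φ W f x = (∑ᶠ y, b x y • (f x - Φ x y (f y))) + W x (f x) := by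
  rw [magneticSchrodinger, sub_apply, Pi.sub_apply, magneticDiagonal_apply,
    magneticAdjacency_apply, finsum_smul, finsum_smul_eq_sum_toFinset b hlf x (fun _ => f x),
    finsum_smul_eq_sum_toFinset b hlf x (fun y => Φ x y (f y)),
    finsum_smul_eq_sum_toFinset b hlf x (fun y => f x - Φ x y (f y))]
  simp only [smul_sub, Finset.sum_sub_distrib]
  abel

theorem magneticDiagonal_mem [∀ x, FiniteDimensional ℂ (F x)] {φ : ∀ x, F x}
    (hφ : φ ∈ finitelySupported ℂ F) : magneticDiagonal b W φ ∈ finitelySupported ℂ F :=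
  hφ.subset fun x hx h => hx (by simp [magneticDiagonal_apply, h])

theorem magneticAdjacency_mem (hsym : ∀ x y, b x y = b y x) {φ : ∀ x, F x}
    (hφ : φ ∈ finitelySupported ℂ F) : magneticAdjacency b hlf Φ φ ∈ finitelySupported ℂ F := by
  refine (hφ.biUnion fun y _ => hlf y).subset fun x hx => ?_
  by_contra hout
  refine hx (?_ : magneticAdjacency b hlf Φ φ x = 0)
  rw [magneticAdjacency_apply]
  refine finsum_eq_zero_of_forall_eq_zero fun y => ?_
  by_cases hy : φ y = 0
  · simp [hy]
  · have hb : b y x = 0 := by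
      by_contra h
      exact hout (Set.mem_biUnion hy h)
    simp [hsym x y, hb]

theorem magneticSchrodinger_mem [∀ x, FiniteDimensional ℂ (F x)] (hsym : ∀ x y, b x y = b y x)
    {φ : ∀ x, F x} (hφ : φ ∈ finitelySupported ℂ F) :
    magneticSchrodinger b hlf Φ W φ ∈ finitelySupported ℂ F :=
  sub_mem (magneticDiagonal_mem b W hφ) (magneticAdjacency_mem b hlf Φ hsym hφ)

theorem inner_magneticAdjacency_apply_left (f : ∀ x, F x) (x : X) (u : F x) :
    ⟪magneticAdjacency b hlf Φ f x, u⟫_ℂ = ∑ᶠ y, b x y • ⟪Φ x y (f y), u⟫_ℂ := by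
  rw [magneticAdjacency_apply, finsum_smul_eq_sum_toFinset b hlf,
    finsum_smul_eq_sum_toFinset b hlf, sum_inner]
  simp_rw [inner_real_smul_left]

theorem inner_magneticAdjacency_apply_right (f : ∀ x, F x) (x : X) (u : F x) :
    ⟪u, magneticAdjacency b hlf Φ f x⟫_ℂ = ∑ᶠ y, b x y • ⟪u, Φ x y (f y)⟫_ℂ := by
  rw [magneticAdjacency_apply, finsum_smul_eq_sum_toFinset b hlf,
    finsum_smul_eq_sum_toFinset b hlf, inner_sum]
  simp_rw [inner_real_smul_right]

theorem finsum_inner_magneticAdjacency (hsym : ∀ x y, b x y = b y x)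
    (hΦ : ∀ x y, (Φ x y).symm = Φ y x) (f : ∀ x, F x) {φ : ∀ x, F x}
    (hφ : φ ∈ finitelySupported ℂ F) :
    ∑ᶠ x, ⟪magneticAdjacency b hlf Φ f x, φ x⟫_ℂ =
      ∑ᶠ x, ⟪f x, magneticAdjacency b hlf Φ φ x⟫_ℂ := by
  have hsupp : HasFiniteSupport (uncurry fun x y => b x y • ⟪Φ x y (f y), φ x⟫_ℂ) := by
    refine (hφ.prod (hφ.biUnion fun x _ => hlf x)).subset fun ⟨x, y⟩ h => ?_
    have hb : b x y ≠ 0 := fun h0 => h (by simp [h0])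
    have hφx : φ x ≠ 0 := fun h0 => h (by simp [h0])
    exact ⟨hφx, Set.mem_biUnion hφx hb⟩
  calc ∑ᶠ x, ⟪magneticAdjacency b hlf Φ f x, φ x⟫_ℂ
      = ∑ᶠ x, ∑ᶠ y, b x y • ⟪Φ x y (f y), φ x⟫_ℂ :=
        finsum_congr fun x => inner_magneticAdjacency_apply_left b hlf Φ f x (φ x)
    _ = ∑ᶠ y, ∑ᶠ x, b x y • ⟪Φ x y (f y), φ x⟫_ℂ := finsum_comm_of_hasFiniteSupport _ hsupp
    _ = ∑ᶠ y, ∑ᶠ x, b y x • ⟪f y, Φ y x (φ x)⟫_ℂ :=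
        finsum_congr fun y => finsum_congr fun x => by
          rw [hsym, LinearIsometryEquiv.inner_map_eq_flip, hΦ]
    _ = ∑ᶠ y, ⟪f y, magneticAdjacency b hlf Φ φ y⟫_ℂ :=
        finsum_congr fun y => (inner_magneticAdjacency_apply_right b hlf Φ φ y (f y)).symm

theorem finsum_inner_magneticDiagonal [∀ x, FiniteDimensional ℂ (F x)]
    (hW : ∀ x, ∀ u v : F x, ⟪W x u, v⟫_ℂ = ⟪u, W x v⟫_ℂ) (f g : ∀ x, F x) :
    ∑ᶠ x, ⟪magneticDiagonal b W f x, g x⟫_ℂ = ∑ᶠ x, ⟪f x, magneticDiagonal b W g x⟫_ℂ :=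
  finsum_congr fun x => by
    simp only [magneticDiagonal_apply, inner_add_left, inner_add_right, inner_real_smul_left,
      inner_real_smul_right, hW]

theorem finsum_inner_magneticSchrodinger [∀ x, FiniteDimensional ℂ (F x)]
    (hsym : ∀ x y, b x y = b y x) (hΦ : ∀ x y, (Φ x y).symm = Φ y x)
    (hW : ∀ x, ∀ u v : F x, ⟪W x u, v⟫_ℂ = ⟪u, W x v⟫_ℂ) (f : ∀ x, F x) {φ : ∀ x, F x}
    (hφ : φ ∈ finitelySupported ℂ F) :
    ∑ᶠ x, ⟪magneticSchrodinger b hlf Φ W f x, φ x⟫_ℂ =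
      ∑ᶠ x, ⟪f x, magneticSchrodinger b hlf Φ W φ x⟫_ℂ := by
  simp only [magneticSchrodinger, sub_apply, Pi.sub_apply, inner_sub_left, inner_sub_right]
  rw [finsum_sub_distrib (hasFiniteSupport_inner_right _ hφ) (hasFiniteSupport_inner_right _ hφ),
    finsum_sub_distrib (hasFiniteSupport_inner_right _ (magneticDiagonal_mem b W hφ))
      (hasFiniteSupport_inner_right _ (magneticAdjacency_mem b hlf Φ hsym hφ)),
    finsum_inner_magneticDiagonal b W hW, finsum_inner_magneticAdjacency b hlf Φ hsym hΦ f hφ]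

end MagneticSchrodinger

theorem magnetic_schroedinger_dual_general
    {X : Type*}
    (b : X → X → ℝ)
    (hsym : ∀ x y, b x y = b y x)
    (hlf : ∀ x, {y | b x y ≠ 0}.Finite)
    (F : X → Type*) [∀ x, NormedAddCommGroup (F x)] [∀ x, InnerProductSpace ℂ (F x)]
    [∀ x, FiniteDimensional ℂ (F x)]
    (Φ : ∀ x y : X, F y ≃ₗᵢ[ℂ] F x)
    (hΦ : ∀ x y : X, (Φ x y).symm = Φ y x)
    (W : ∀ x, F x →ₗ[ℂ] F x)
    (hW : ∀ x, ∀ u v : F x, (inner ℂ (W x u) v : ℂ) = inner ℂ u (W x v)) :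
    Continuous (fun (f : ∀ x, F x) (x : X) =>
        (∑ᶠ y, b x y • (f x - Φ x y (f y))) + W x (f x)) ∧
    (∀ φ : ∀ x, F x, {x | φ x ≠ 0}.Finite →
      {x | (∑ᶠ y, b x y • (φ x - Φ x y (φ y))) + W x (φ x) ≠ 0}.Finite) ∧
    (∀ φ ψ : ∀ x, F x, {x | φ x ≠ 0}.Finite → {x | ψ x ≠ 0}.Finite →
      ∑ᶠ x, (inner ℂ (φ x) ((∑ᶠ y, b x y • (ψ x - Φ x y (ψ y))) + W x (ψ x)) : ℂ) =
        ∑ᶠ x, (inner ℂ ((∑ᶠ y, b x y • (φ x - Φ x y (φ y))) + W x (φ x)) (ψ x) : ℂ)) ∧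
    (Function.Surjective (fun (f : ∀ x, F x) (x : X) =>
        (∑ᶠ y, b x y • (f x - Φ x y (f y))) + W x (f x)) ↔
      ∀ φ : ∀ x, F x, {x | φ x ≠ 0}.Finite →
        (∀ x, (∑ᶠ y, b x y • (φ x - Φ x y (φ y))) + W x (φ x) = 0) → φ = 0) := by
  simp only [← magneticSchrodinger_apply b hlf Φ W]
  refine ⟨(magneticSchrodinger b hlf Φ W).continuous,
    fun φ hφ => magneticSchrodinger_mem b hlf Φ W hsym hφ,
    fun φ ψ _ hψ => (finsum_inner_magneticSchrodinger b hlf Φ W hsym hΦ hW φ hψ).symm, ?_⟩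
  simpa only [funext_iff, Pi.zero_apply, mem_finitelySupported, ContinuousLinearMap.coe_coe] using
    surjective_iff_injective_on_finitelySupported
      (T := (magneticSchrodinger b hlf Φ W).toLinearMap)
      (fun φ hφ => magneticSchrodinger_mem b hlf Φ W hsym hφ)
      (fun f φ hφ => finsum_inner_magneticSchrodinger b hlf Φ W hsym hΦ hW f hφ)

/-- **Continuity, symmetry and duality for magnetic Schrödinger operators.**
Let `(X,b)` be a locally finite weighted graph, `F` a Hermitian vector bundle with
finite-dimensional fibers, `Φ` a unitary connection with `Φ_{yx} = Φ_{xy}⁻¹` and `W` a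
self-adjoint bundle endomorphism.  Then the magnetic Schrödinger operator
`M f x = ∑_y b(x,y)(f x - Φ_{xy} f y) + W x (f x)` is continuous on `Γ(X;F)` (product
topology), maps `Γ_c(X;F)` into `Γ_c(X;F)`, is symmetric in the sense that
`(φ, Mψ) = (Mφ, ψ)` for all `φ, ψ ∈ Γ_c(X;F)`, and it is surjective if and only if its
restriction to `Γ_c(X;F)` is injective. -/
theorem magnetic_schroedinger_dual
    {X : Type*} [Countable X]
    (b : X → X → ℝ)
    (hb0 : ∀ x, b x x = 0)
    (hbnn : ∀ x y, 0 ≤ b x y)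
    (hsym : ∀ x y, b x y = b y x)
    (hlf : ∀ x, {y | b x y ≠ 0}.Finite)
    (F : X → Type*) [∀ x, NormedAddCommGroup (F x)] [∀ x, InnerProductSpace ℂ (F x)]
    [∀ x, FiniteDimensional ℂ (F x)]
    (Φ : ∀ x y : X, F y ≃ₗᵢ[ℂ] F x)
    (hΦ : ∀ x y : X, (Φ x y).symm = Φ y x)
    (W : ∀ x, F x →ₗ[ℂ] F x)
    (hW : ∀ x, ∀ u v : F x, (inner ℂ (W x u) v : ℂ) = inner ℂ u (W x v)) :
    Continuous (fun (f : ∀ x, F x) (x : X) =>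
        (∑ᶠ y, b x y • (f x - Φ x y (f y))) + W x (f x)) ∧
    (∀ φ : ∀ x, F x, {x | φ x ≠ 0}.Finite →
      {x | (∑ᶠ y, b x y • (φ x - Φ x y (φ y))) + W x (φ x) ≠ 0}.Finite) ∧
    (∀ φ ψ : ∀ x, F x, {x | φ x ≠ 0}.Finite → {x | ψ x ≠ 0}.Finite →
      ∑ᶠ x, (inner ℂ (φ x) ((∑ᶠ y, b x y • (ψ x - Φ x y (ψ y))) + W x (ψ x)) : ℂ) =
        ∑ᶠ x, (inner ℂ ((∑ᶠ y, b x y • (φ x - Φ x y (φ y))) + W x (φ x)) (ψ x) : ℂ)) ∧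
    (Function.Surjective (fun (f : ∀ x, F x) (x : X) =>
        (∑ᶠ y, b x y • (f x - Φ x y (f y))) + W x (f x)) ↔
      ∀ φ : ∀ x, F x, {x | φ x ≠ 0}.Finite →
        (∀ x, (∑ᶠ y, b x y • (φ x - Φ x y (φ y))) + W x (φ x) = 0) → φ = 0) :=
  magnetic_schroedinger_dual_general b hsym hlf F Φ hΦ W hW
end

section
/- Let (X,b) be a weighted graph and V : X → ℝ a potential such that the quadratic form q_V is nonnegative on C_c(X). If h ∈ C_c(X) satisfies q_V(h) = 0, then the set {x ∈ X : h(x) ≠ 0} is a union of connected components of (X,b). In particular, if all connected components of (X,b) are infinite, then h = 0. -/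
section aux
variable {X : Type*} (b : X → X → ℝ)

lemma sq_norm_sub_le (f : X → ℂ) (x y : X) :
    ‖f x - f y‖ ^ 2 ≤ 2 * ‖f x‖ ^ 2 + 2 * ‖f y‖ ^ 2 := by
  have h1 := norm_sub_le (f x) (f y)
  have h2 : ‖f x - f y‖ ^ 2 ≤ (‖f x‖ + ‖f y‖) ^ 2 := by
    have := norm_nonneg (f x - f y)
    nlinarith
  nlinarith [sq_nonneg (‖f x‖ - ‖f y‖)]

lemma inner_summable (hbnn : ∀ x y, 0 ≤ b x y) (hdeg : ∀ x, Summable fun y => b x y)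
    (f : X → ℂ) (hf : {x | f x ≠ 0}.Finite) (x : X) :
    Summable fun y => b x y * ‖f x - f y‖ ^ 2 := by
  have h2 : Summable fun y => b x y * (2 * ‖f y‖ ^ 2) := by
    apply summable_of_ne_finset_zero (s := hf.toFinset)
    intro y hy
    have : f y = 0 := by simpa using hy
    simp [this]
  have hmaj : Summable fun y => b x y * (2 * ‖f x‖ ^ 2 + 2 * ‖f y‖ ^ 2) := by
    have h1 : Summable fun y => b x y * (2 * ‖f x‖ ^ 2) := (hdeg x).mul_right _
    simpa [mul_add] using h1.add h2
  refine Summable.of_nonneg_of_le (fun y => mul_nonneg (hbnn x y) (sq_nonneg _)) ?_ hmaj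
  intro y
  exact mul_le_mul_of_nonneg_left (sq_norm_sub_le f x y) (hbnn x y)

lemma outer_summable (hbnn : ∀ x y, 0 ≤ b x y) (hsym : ∀ x y, b x y = b y x)
    (hdeg : ∀ x, Summable fun y => b x y)
    (f : X → ℂ) (hf : {x | f x ≠ 0}.Finite) :
    Summable fun x => ∑' y, b x y * ‖f x - f y‖ ^ 2 := by
  classical
  set F := hf.toFinset with hF
  have hM : Summable fun x => (2 * ‖f x‖ ^ 2) * (∑' y, b x y) + ∑ y ∈ F, b x y * (2 * ‖f y‖ ^ 2) := by
    have h1 : Summable fun x => (2 * ‖f x‖ ^ 2) * (∑' y, b x y) := by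
      apply summable_of_ne_finset_zero (s := F)
      intro x hx
      have : f x = 0 := by simpa [hF] using hx
      simp [this]
    have h2 : Summable fun x => ∑ y ∈ F, b x y * (2 * ‖f y‖ ^ 2) := by
      apply summable_sum
      intro y _
      exact ((hdeg y).congr (fun x => hsym y x)).mul_right _
    exact h1.add h2
  refine Summable.of_nonneg_of_le
    (fun x => tsum_nonneg fun y => mul_nonneg (hbnn x y) (sq_nonneg _)) ?_ hM
  intro x
  have h1 : Summable fun y => b x y * (2 * ‖f x‖ ^ 2) := (hdeg x).mul_right _
  have h2 : Summable fun y => b x y * (2 * ‖f y‖ ^ 2) := by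
    apply summable_of_ne_finset_zero (s := F)
    intro y hy
    have : f y = 0 := by simpa [hF] using hy
    simp [this]
  calc ∑' y, b x y * ‖f x - f y‖ ^ 2
      ≤ ∑' y, (b x y * (2 * ‖f x‖ ^ 2) + b x y * (2 * ‖f y‖ ^ 2)) := by
        apply Summable.tsum_le_tsum _ (inner_summable b hbnn hdeg f hf x) (h1.add h2)
        intro y
        have := mul_le_mul_of_nonneg_left (sq_norm_sub_le f x y) (hbnn x y)
        linarith [this, (mul_add (b x y) (2 * ‖f x‖ ^ 2) (2 * ‖f y‖ ^ 2))]
    _ = (∑' y, b x y * (2 * ‖f x‖ ^ 2)) + ∑' y, b x y * (2 * ‖f y‖ ^ 2) := Summable.tsum_add h1 h2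
    _ = (2 * ‖f x‖ ^ 2) * (∑' y, b x y) + ∑ y ∈ F, b x y * (2 * ‖f y‖ ^ 2) := by
        rw [tsum_mul_right, mul_comm]
        congr 1
        apply tsum_eq_sum
        intro y hy
        have : f y = 0 := by simpa [hF] using hy
        simp [this]

lemma qForm_real (V : X → ℝ) (g : X → ℝ) :
    qForm b V (fun x => (g x : ℂ)) =
      (1 / 2) * ∑' x, ∑' y, b x y * (g x - g y) ^ 2 + ∑' x, V x * (g x) ^ 2 := by
  unfold qForm
  have hn : ∀ r s : ℝ, ‖((r : ℂ)) - (s : ℂ)‖ ^ 2 = (r - s) ^ 2 := by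
    intro r s
    rw [← Complex.ofReal_sub, Complex.norm_real, Real.norm_eq_abs, sq_abs]
  congr 1
  · congr 1
    exact tsum_congr fun x => tsum_congr fun y => by rw [hn]
  · exact tsum_congr fun x => by
      rw [Complex.norm_real, Real.norm_eq_abs, sq_abs]

end aux

section key
variable {X : Type*}

lemma key_vanish (b : X → X → ℝ)
    (hb0 : ∀ x, b x x = 0)
    (hbnn : ∀ x y, 0 ≤ b x y)
    (hsym : ∀ x y, b x y = b y x)
    (hdeg : ∀ x, Summable fun y => b x y)
    (V : X → ℝ)
    (hq : ∀ f : X → ℂ, {x | f x ≠ 0}.Finite → 0 ≤ qForm b V f)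
    (w : X → ℝ) (hwfin : {x | w x ≠ 0}.Finite) (hwnn : ∀ x, 0 ≤ w x)
    (hqw : qForm b V (fun x => (w x : ℂ)) = 0)
    (a c : X) (hac : 0 < b a c) (hwa : w a = 0) : w c = 0 := by
  classical
  by_contra hwc
  -- the sum S = ∑ b a y * w y is positive
  have hSsum : Summable fun y => b a y * w y := by
    apply summable_of_ne_finset_zero (s := hwfin.toFinset)
    intro y hy
    have : w y = 0 := by simpa using hy
    simp [this]
  set S := ∑' y, b a y * w y with hSdef
  have hSpos : 0 < S := by
    have hterm : 0 < b a c * w c :=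
      mul_pos hac (lt_of_le_of_ne (hwnn c) (Ne.symm hwc))
    exact lt_of_lt_of_le hterm
      (Summable.le_tsum hSsum c fun y _ => mul_nonneg (hbnn a y) (hwnn y))
  set dega := ∑' y, b a y with hdega
  set D := dega + V a with hD
  set t := S / (|D| + 1) with ht
  have habs : (0:ℝ) < |D| + 1 := by positivity
  have htpos : 0 < t := div_pos hSpos habs
  have hteq : t * (|D| + 1) = S := div_mul_cancel₀ S (ne_of_gt habs)
  set f := Function.update w a t with hf
  have hfa : f a = t := Function.update_self a t w
  have hfne : ∀ x, x ≠ a → f x = w x := fun x hx => Function.update_of_ne hx t w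
  have hffin : {x | f x ≠ 0}.Finite := by
    apply (hwfin.insert a).subset
    intro x hx
    by_cases hxa : x = a
    · exact Or.inl hxa
    · exact Or.inr (by simpa [hfne x hxa] using hx)
  -- summabilities
  have hwfinC : {x | ((w x : ℂ)) ≠ 0}.Finite := by
    convert hwfin using 1; ext x; simp
  have hffinC : {x | ((f x : ℂ)) ≠ 0}.Finite := by
    convert hffin using 1; ext x; simp
  have hnorm : ∀ (g : X → ℝ) (x y : X), ‖((g x : ℂ)) - (g y : ℂ)‖ ^ 2 = (g x - g y) ^ 2 := by
    intro g x y
    rw [← Complex.ofReal_sub, Complex.norm_real, Real.norm_eq_abs, sq_abs]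
  have hinner : ∀ (g : X → ℝ), {x | g x ≠ 0}.Finite → ∀ x,
      Summable fun y => b x y * (g x - g y) ^ 2 := by
    intro g hg x
    have hgC : {x | ((g x : ℂ)) ≠ 0}.Finite := by
      convert hg using 1; ext x; simp
    exact (inner_summable b hbnn hdeg (fun x => (g x : ℂ)) hgC x).congr
      (fun y => by rw [hnorm])
  have houter : ∀ (g : X → ℝ), {x | g x ≠ 0}.Finite →
      Summable fun x => ∑' y, b x y * (g x - g y) ^ 2 := by
    intro g hg
    have hgC : {x | ((g x : ℂ)) ≠ 0}.Finite := by
      convert hg using 1; ext x; simp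
    exact (outer_summable b hbnn hsym hdeg (fun x => (g x : ℂ)) hgC).congr
      (fun x => tsum_congr fun y => by rw [hnorm])
  -- inner differences
  have hd : ∀ x, (∑' y, b x y * (f x - f y) ^ 2) - (∑' y, b x y * (w x - w y) ^ 2)
      = (b x a * (t ^ 2 - 2 * t * w x)) +
        (if x = a then t ^ 2 * dega - 2 * t * S else 0) := by
    intro x
    have hsub : (∑' y, b x y * (f x - f y) ^ 2) - (∑' y, b x y * (w x - w y) ^ 2)
        = ∑' y, (b x y * (f x - f y) ^ 2 - b x y * (w x - w y) ^ 2) :=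
      (Summable.tsum_sub (hinner f hffin x) (hinner w hwfin x)).symm
    by_cases hxa : x = a
    · subst hxa
      rw [hsub]
      have hsummand : ∀ y, b x y * (f x - f y) ^ 2 - b x y * (w x - w y) ^ 2
          = t ^ 2 * b x y - 2 * t * (b x y * w y) := by
        intro y
        by_cases hya : y = x
        · rw [hya, hb0 x]; ring
        · rw [hfa, hfne y hya, hwa]
          ring
      rw [tsum_congr hsummand,
        Summable.tsum_sub ((hdeg x).mul_left _) (hSsum.mul_left _),
        tsum_mul_left, tsum_mul_left]
      rw [if_pos rfl, hb0 x, hdega, hSdef]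
      ring
    · rw [hsub, tsum_eq_single a ?_]
      · rw [hfne x hxa, hfa, hwa, if_neg hxa]
        ring
      · intro y hya
        rw [hfne x hxa, hfne y hya]
        ring
  -- sum the inner differences over x
  have hbxa : Summable fun x => b x a := (hdeg a).congr fun x => hsym a x
  have hbxaw : Summable fun x => b x a * w x := by
    apply summable_of_ne_finset_zero (s := hwfin.toFinset)
    intro x hx
    have : w x = 0 := by simpa using hx
    simp [this]
  have he1 : Summable fun x => b x a * (t ^ 2 - 2 * t * w x) := by
    have : Summable fun x => t ^ 2 * b x a - 2 * t * (b x a * w x) :=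
      (hbxa.mul_left _).sub (hbxaw.mul_left _)
    exact this.congr fun x => by ring
  have he1sum : (∑' x, b x a * (t ^ 2 - 2 * t * w x)) = t ^ 2 * dega - 2 * t * S := by
    have h1 : (∑' x, b x a * (t ^ 2 - 2 * t * w x))
        = ∑' x, (t ^ 2 * b x a - 2 * t * (b x a * w x)) :=
      tsum_congr fun x => by ring
    rw [h1, Summable.tsum_sub (hbxa.mul_left _) (hbxaw.mul_left _), tsum_mul_left, tsum_mul_left]
    have h2 : (∑' x, b x a) = dega := by
      rw [hdega]; exact tsum_congr fun x => hsym x a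
    have h3 : (∑' x, b x a * w x) = S := by
      rw [hSdef]; exact tsum_congr fun x => by rw [hsym x a]
    rw [h2, h3]
  have he2 : Summable fun x => (if x = a then t ^ 2 * dega - 2 * t * S else 0 : ℝ) := by
    apply summable_of_ne_finset_zero (s := {a})
    intro x hx
    simp at hx
    simp [hx]
  have he2sum : (∑' x, (if x = a then t ^ 2 * dega - 2 * t * S else 0 : ℝ))
      = t ^ 2 * dega - 2 * t * S := tsum_ite_eq a _
  have hdsum : (∑' x, ∑' y, b x y * (f x - f y) ^ 2)
      - (∑' x, ∑' y, b x y * (w x - w y) ^ 2)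
      = 2 * (t ^ 2 * dega - 2 * t * S) := by
    rw [← Summable.tsum_sub (houter f hffin) (houter w hwfin), tsum_congr hd,
      Summable.tsum_add he1 he2, he1sum, he2sum]
    ring
  -- potential difference
  have hVs : ∀ (g : X → ℝ), {x | g x ≠ 0}.Finite → Summable fun x => V x * g x ^ 2 := by
    intro g hg
    apply summable_of_ne_finset_zero (s := hg.toFinset)
    intro x hx
    have : g x = 0 := by simpa using hx
    simp [this]
  have hpot : (∑' x, V x * f x ^ 2) - (∑' x, V x * w x ^ 2) = V a * t ^ 2 := by
    rw [← Summable.tsum_sub (hVs f hffin) (hVs w hwfin), tsum_eq_single a ?_]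
    · rw [hfa, hwa]; ring
    · intro x hx
      rw [hfne x hx]; ring
  -- value of the form at f
  have hexp : qForm b V (fun x => (f x : ℂ)) = t ^ 2 * D - 2 * t * S := by
    rw [qForm_real b V f]
    rw [qForm_real b V w] at hqw
    have hDt : t ^ 2 * D = t ^ 2 * dega + t ^ 2 * V a := by rw [hD]; ring
    linarith [hdsum, hpot, hqw, hDt]
  -- contradiction
  have h0 := hq (fun x => (f x : ℂ)) hffinC
  rw [hexp] at h0
  have e1 : t ^ 2 * D ≤ t ^ 2 * |D| :=
    mul_le_mul_of_nonneg_left (le_abs_self D) (sq_nonneg t)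
  have hteq' : t * |D| + t = S := by
    have : t * (|D| + 1) = t * |D| + t := by ring
    linarith [hteq, this]
  have e2 : t ^ 2 * |D| = t * S - t ^ 2 := by
    have h4 : t * |D| = S - t := by linarith
    calc t ^ 2 * |D| = t * (t * |D|) := by ring
      _ = t * (S - t) := by rw [h4]
      _ = t * S - t ^ 2 := by ring
  have hts : 0 < t * S := mul_pos htpos hSpos
  nlinarith [h0, e1, e2, hts, sq_nonneg t]
end key

/-- **Kernel of `q_V`.**
Let `(X,b)` be a weighted graph and `V : X → ℝ` such that the quadratic form `q_V` is
nonnegative on `C_c(X)`.  If `h ∈ C_c(X)` satisfies `q_V(h) = 0`, then `{h ≠ 0}` is a union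
of connected components (i.e. whenever `h x ≠ 0` and `y` is connected to `x` by a path, also
`h y ≠ 0`).  In particular, if all connected components of `(X,b)` are infinite,
then `h = 0`. -/
theorem qForm_kernel_union_of_components
    {X : Type*} [Countable X]
    (b : X → X → ℝ)
    (hb0 : ∀ x, b x x = 0)
    (hbnn : ∀ x y, 0 ≤ b x y)
    (hsym : ∀ x y, b x y = b y x)
    (hdeg : ∀ x, Summable fun y => b x y)
    (V : X → ℝ)
    (hq : ∀ f : X → ℂ, {x | f x ≠ 0}.Finite → 0 ≤ qForm b V f)
    (h : X → ℂ) (hfin : {x | h x ≠ 0}.Finite) (hzero : qForm b V h = 0) :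
    (∀ x y : X, h x ≠ 0 → Relation.ReflTransGen (fun u v => 0 < b u v) x y → h y ≠ 0) ∧
    ((∀ x, {y | Relation.ReflTransGen (fun u v => 0 < b u v) x y}.Infinite) → h = 0) := by
  classical
  set w : X → ℝ := fun x => ‖h x‖ with hw
  have hwfin : {x | w x ≠ 0}.Finite := by
    convert hfin using 1
    ext x
    simp [hw]
  have hwnn : ∀ x, 0 ≤ w x := fun x => norm_nonneg _
  have hwfinC : {x | ((w x : ℂ)) ≠ 0}.Finite := by
    convert hwfin using 1; ext x; simp
  -- q_V(|h|) ≤ q_V(h) = 0, and q_V(|h|) ≥ 0, so q_V(|h|) = 0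
  have hqw : qForm b V (fun x => (w x : ℂ)) = 0 := by
    have hle : qForm b V (fun x => (w x : ℂ)) ≤ qForm b V h := by
      rw [qForm_real b V w]
      unfold qForm
      have hterm : ∀ x y, b x y * (w x - w y) ^ 2 ≤ b x y * ‖h x - h y‖ ^ 2 := by
        intro x y
        apply mul_le_mul_of_nonneg_left _ (hbnn x y)
        have h1 : |w x - w y| ≤ ‖h x - h y‖ := abs_norm_sub_norm_le (h x) (h y)
        nlinarith [sq_abs (w x - w y), abs_nonneg (w x - w y), norm_nonneg (h x - h y)]
      have hinnerw : ∀ x, Summable fun y => b x y * (w x - w y) ^ 2 := by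
        intro x
        exact (inner_summable b hbnn hdeg (fun x => (w x : ℂ)) hwfinC x).congr
          (fun y => by rw [← Complex.ofReal_sub, Complex.norm_real, Real.norm_eq_abs, sq_abs])
      have hinner_le : ∀ x, (∑' y, b x y * (w x - w y) ^ 2) ≤ ∑' y, b x y * ‖h x - h y‖ ^ 2 :=
        fun x => Summable.tsum_le_tsum (hterm x) (hinnerw x) (inner_summable b hbnn hdeg h hfin x)
      have houterw : Summable fun x => ∑' y, b x y * (w x - w y) ^ 2 :=
        (outer_summable b hbnn hsym hdeg (fun x => (w x : ℂ)) hwfinC).congr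
          (fun x => tsum_congr fun y => by
            rw [← Complex.ofReal_sub, Complex.norm_real, Real.norm_eq_abs, sq_abs])
      have houter_le : (∑' x, ∑' y, b x y * (w x - w y) ^ 2)
          ≤ ∑' x, ∑' y, b x y * ‖h x - h y‖ ^ 2 :=
        Summable.tsum_le_tsum hinner_le houterw (outer_summable b hbnn hsym hdeg h hfin)
      have hVeq : (∑' x, V x * w x ^ 2) = ∑' x, V x * ‖h x‖ ^ 2 :=
        tsum_congr fun x => rfl
      linarith [houter_le, hVeq.le, hVeq.ge]
    have hge := hq (fun x => (w x : ℂ)) hwfinC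
    linarith [hle, hzero ▸ hle, hge]
  -- the edge step
  have hstep : ∀ u v : X, h u ≠ 0 → 0 < b u v → h v ≠ 0 := by
    intro u v hu huv hv
    have hwv : w v = 0 := by simp [hw, hv]
    have := key_vanish b hb0 hbnn hsym hdeg V hq w hwfin hwnn hqw v u
      (by rw [hsym v u]; exact huv) hwv
    exact hu (by simpa [hw] using this)
  constructor
  · intro x y hx hpath
    induction hpath with
    | refl => exact hx
    | tail _ hedge ih => exact hstep _ _ ih hedge
  · intro hinf
    funext x
    by_contra hx
    have hsub : {y | Relation.ReflTransGen (fun u v => 0 < b u v) x y} ⊆ {y | h y ≠ 0} := by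
      intro y hy
      have : ∀ x y : X, h x ≠ 0 → Relation.ReflTransGen (fun u v => 0 < b u v) x y → h y ≠ 0 := by
        intro x' y' hx' hp
        induction hp with
        | refl => exact hx'
        | tail _ hedge ih => exact hstep _ _ ih hedge
      exact this x y hx hy
    exact ((hinf x).mono hsub) hfin
end

section
/- Let (X,b) be a weighted graph and V : X → ℝ such that the quadratic form q_V is nonnegative on C_c(X). Let h ∈ C_c(X) be nonnegative (real-valued) with q_V(h) = 0. Then for every φ ∈ C_c(X) one has q_V(φ·1_{{h>0}}) ≤ q_V(φ), where 1_{{h>0}} is the indicator function of the set {x : h(x) > 0}. -/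
open Filter Topology
open scoped InnerProductSpace

lemma summable_of_eq_zero_off_finite {X : Type*} {u : X → ℝ} {s : Set X} (hs : s.Finite)
    (hu : ∀ x ∉ s, u x = 0) : Summable u :=
  summable_of_hasFiniteSupport (hs.subset fun x hx => by_contra fun h => hx (hu x h))

lemma HasSum.of_add_two_mul_add {ι : Type*} {A B C P : ι → ℝ} {a b c : ℝ} (hA : HasSum A a)
    (hB : HasSum B b) (hC : HasSum C c) (h : ∀ i, C i = A i + 2 * P i + B i) :
    HasSum P ((c - a - b) / 2) := by
  have hP : P = fun i => (C i - A i - B i) / 2 := funext fun i => by rw [h i]; ring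
  exact hP ▸ ((hC.sub hA).sub hB).div_const 2

lemma nonpos_of_forall_pos_le_mul {a q : ℝ} (h : ∀ t > 0, a ≤ t * q) : a ≤ 0 := by
  have hlim : Tendsto (fun t : ℝ => t * q) (𝓝[>] 0) (𝓝 0) := by
    simpa using ((continuous_mul_const q).tendsto 0).mono_left nhdsWithin_le_nhds
  exact ge_of_tendsto hlim (eventually_nhdsWithin_of_forall h)

lemma tsum_le_of_nonpos {ι : Type*} {F : ι → ℝ} (hF : Summable F) (hnp : ∀ i, F i ≤ 0) (i : ι) :
    ∑' j, F j ≤ F i := by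
  have := hF.neg.le_tsum i fun j _ => neg_nonneg.2 (hnp j)
  rw [tsum_neg] at this
  linarith

lemma norm_sub_sq_le_two_mul (a c : ℂ) : ‖a - c‖ ^ 2 ≤ 2 * ‖a‖ ^ 2 + 2 * ‖c‖ ^ 2 := by
  nlinarith [norm_sub_le a c, sq_nonneg (‖a‖ - ‖c‖), norm_nonneg (a - c)]

section WeightedGraph

variable {X : Type*} {b : X → X → ℝ} {f g : X → ℂ}

lemma summable_edge (hbnn : ∀ x y, 0 ≤ b x y) (hdeg : ∀ x, Summable (b x))
    (hf : {x | f x ≠ 0}.Finite) (x : X) : Summable fun y => b x y * ‖f x - f y‖ ^ 2 := by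
  have hfar : Summable fun y => 2 * b x y * ‖f y‖ ^ 2 :=
    summable_of_eq_zero_off_finite hf fun y hy => by simp_all
  refine ((hdeg x).mul_left (2 * ‖f x‖ ^ 2) |>.add hfar).of_nonneg_of_le
    (fun y => mul_nonneg (hbnn x y) (sq_nonneg _)) fun y => ?_
  nlinarith [hbnn x y, norm_sub_sq_le_two_mul (f x) (f y)]

lemma summable_tsum_edge (hbnn : ∀ x y, 0 ≤ b x y) (hsym : ∀ x y, b x y = b y x)
    (hdeg : ∀ x, Summable (b x)) (hf : {x | f x ≠ 0}.Finite) :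
    Summable fun x => ∑' y, b x y * ‖f x - f y‖ ^ 2 := by
  have hnear : Summable fun x => 2 * ‖f x‖ ^ 2 * ∑' y, b x y :=
    summable_of_eq_zero_off_finite hf fun x hx => by simp_all
  have hfar : Summable fun x => ∑' y, 2 * b x y * ‖f y‖ ^ 2 := by
    refine (summable_sum (s := hf.toFinset) fun y _ =>
      ((hdeg y).mul_left (2 * ‖f y‖ ^ 2))).congr fun x => ?_
    rw [tsum_eq_sum (s := hf.toFinset) fun y hy => by simp_all]
    exact Finset.sum_congr rfl fun y _ => by rw [hsym]; ring
  refine (hnear.add hfar).of_nonneg_of_le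
    (fun x => tsum_nonneg fun y => mul_nonneg (hbnn x y) (sq_nonneg _)) fun x => ?_
  have hfar_x : Summable fun y => 2 * b x y * ‖f y‖ ^ 2 :=
    summable_of_eq_zero_off_finite hf fun y hy => by simp_all
  rw [← tsum_mul_left, ← Summable.tsum_add ((hdeg x).mul_left _) hfar_x]
  refine Summable.tsum_le_tsum (fun y => ?_) (summable_edge hbnn hdeg hf x)
    (((hdeg x).mul_left _).add hfar_x)
  nlinarith [hbnn x y, norm_sub_sq_le_two_mul (f x) (f y)]

lemma real_inner_ofReal_ofReal (r s : ℝ) : ⟪(r : ℂ), (s : ℂ)⟫_ℝ = r * s := by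
  simp [Complex.inner, mul_comm]

variable (b) in
noncomputable def qPolar (V : X → ℝ) (f g : X → ℂ) : ℝ :=
  (1 / 2) * ∑' x, ∑' y, b x y * ⟪f x - f y, g x - g y⟫_ℝ + ∑' x, V x * ⟪f x, g x⟫_ℝ

section Polarization

variable (hbnn : ∀ x y, 0 ≤ b x y) (hdeg : ∀ x, Summable (b x))
  (hf : {x | f x ≠ 0}.Finite) (hg : {x | g x ≠ 0}.Finite)
include hbnn hdeg hf hg

lemma hasSum_edge_polar (x : X) :
    HasSum (fun y => b x y * ⟪f x - f y, g x - g y⟫_ℝ)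
      ((∑' y, b x y * ‖(f + g) x - (f + g) y‖ ^ 2 - ∑' y, b x y * ‖f x - f y‖ ^ 2
        - ∑' y, b x y * ‖g x - g y‖ ^ 2) / 2) :=
  (summable_edge hbnn hdeg hf x).hasSum.of_add_two_mul_add
    (summable_edge hbnn hdeg hg x).hasSum
    (summable_edge hbnn hdeg (Function.HasFiniteSupport.add hf hg) x).hasSum
    fun y => by rw [Pi.add_apply, Pi.add_apply, add_sub_add_comm, norm_add_sq_real]; ring

lemma hasSum_tsum_edge_polar (hsym : ∀ x y, b x y = b y x) :
    HasSum (fun x => ∑' y, b x y * ⟪f x - f y, g x - g y⟫_ℝ)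
      ((∑' x, ∑' y, b x y * ‖(f + g) x - (f + g) y‖ ^ 2 - ∑' x, ∑' y, b x y * ‖f x - f y‖ ^ 2
        - ∑' x, ∑' y, b x y * ‖g x - g y‖ ^ 2) / 2) :=
  (summable_tsum_edge hbnn hsym hdeg hf).hasSum.of_add_two_mul_add
    (summable_tsum_edge hbnn hsym hdeg hg).hasSum
    (summable_tsum_edge hbnn hsym hdeg (Function.HasFiniteSupport.add hf hg)).hasSum
    fun x => by rw [(hasSum_edge_polar hbnn hdeg hf hg x).tsum_eq]; ring

end Polarization

lemma hasSum_potential_polar (V : X → ℝ) (hf : {x | f x ≠ 0}.Finite)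
    (hg : {x | g x ≠ 0}.Finite) :
    HasSum (fun x => V x * ⟪f x, g x⟫_ℝ)
      ((∑' x, V x * ‖(f + g) x‖ ^ 2 - ∑' x, V x * ‖f x‖ ^ 2 - ∑' x, V x * ‖g x‖ ^ 2) / 2) := by
  have hsum {k : X → ℂ} (hk : {x | k x ≠ 0}.Finite) : Summable fun x => V x * ‖k x‖ ^ 2 :=
    summable_of_eq_zero_off_finite hk fun x hx => by simp_all
  exact (hsum hf).hasSum.of_add_two_mul_add (hsum hg).hasSum
    (hsum (Function.HasFiniteSupport.add hf hg)).hasSum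
    fun x => by rw [Pi.add_apply, norm_add_sq_real]; ring

theorem qForm_add (hbnn : ∀ x y, 0 ≤ b x y) (hsym : ∀ x y, b x y = b y x)
    (hdeg : ∀ x, Summable (b x)) (V : X → ℝ) (hf : {x | f x ≠ 0}.Finite)
    (hg : {x | g x ≠ 0}.Finite) :
    qForm b V (f + g) = qForm b V f + 2 * qPolar b V f g + qForm b V g := by
  rw [qPolar, (hasSum_tsum_edge_polar hbnn hdeg hf hg hsym).tsum_eq,
    (hasSum_potential_polar V hf hg).tsum_eq]
  unfold qForm
  ring

lemma qForm_smul (V : X → ℝ) (t : ℝ) (f : X → ℂ) : qForm b V (t • f) = t ^ 2 * qForm b V f := by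
  have hnorm (z : ℂ) : ‖t • z‖ ^ 2 = t ^ 2 * ‖z‖ ^ 2 := by
    rw [norm_smul, mul_pow, Real.norm_eq_abs, sq_abs]
  simp only [qForm, Pi.smul_apply, ← smul_sub, hnorm, mul_left_comm _ (t ^ 2), tsum_mul_left]
  ring

lemma qPolar_smul_right (V : X → ℝ) (t : ℝ) (f g : X → ℂ) :
    qPolar b V f (t • g) = t * qPolar b V f g := by
  simp only [qPolar, Pi.smul_apply, ← smul_sub, real_inner_smul_right, mul_left_comm _ t,
    tsum_mul_left]
  ring

lemma qPolar_eq_zero_of_disjoint (hsym : ∀ x y, b x y = b y x) (V : X → ℝ)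
    (hfg : ∀ x, f x = 0 ∨ g x = 0) (hb : ∀ x y, f x ≠ 0 → g y ≠ 0 → b x y = 0) :
    qPolar b V f g = 0 := by
  have hdiag (x : X) : ⟪f x, g x⟫_ℝ = 0 := by
    rcases hfg x with h | h <;> simp [h]
  have hcross (x y : X) : b x y * ⟪f x, g y⟫_ℝ = 0 := by
    by_cases hx : f x = 0
    · simp [hx]
    by_cases hy : g y = 0
    · simp [hy]
    simp [hb x y hx hy]
  have hedge (x y : X) : b x y * ⟪f x - f y, g x - g y⟫_ℝ = 0 := by
    have := hcross y x
    rw [hsym] at this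
    simp only [inner_sub_left, inner_sub_right, hdiag]
    linear_combination -hcross x y - this
  simp only [qPolar, hedge, hdiag, mul_zero, tsum_zero, add_zero]

section Nonnegative

variable {u v : X → ℝ}

lemma qPolar_ofReal_le (hbnn : ∀ x y, 0 ≤ b x y) (hsym : ∀ x y, b x y = b y x)
    (hdeg : ∀ x, Summable (b x)) (V : X → ℝ) (hu : ∀ x, 0 ≤ u x) (hv : ∀ x, 0 ≤ v x)
    (huv : ∀ x, u x * v x = 0) (hufin : {x | u x ≠ 0}.Finite) (hvfin : {x | v x ≠ 0}.Finite)
    (x y : X) :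
    qPolar b V (fun z => (u z : ℂ)) (fun z => (v z : ℂ)) ≤ -(b x y * u x * v y) / 2 := by
  have hU : {z | (u z : ℂ) ≠ 0}.Finite := by simpa using hufin
  have hV : {z | (v z : ℂ) ≠ 0}.Finite := by simpa using hvfin
  have hedge (a c : X) : b a c * ⟪(u a : ℂ) - u c, (v a : ℂ) - v c⟫_ℝ
      = -(b a c * u a * v c) - b a c * u c * v a := by
    rw [← Complex.ofReal_sub, ← Complex.ofReal_sub, real_inner_ofReal_ofReal]
    linear_combination b a c * (huv a + huv c)
  have hedge_nonpos (a c : X) : b a c * ⟪(u a : ℂ) - u c, (v a : ℂ) - v c⟫_ℝ ≤ 0 := by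
    rw [hedge]
    nlinarith [mul_nonneg (mul_nonneg (hbnn a c) (hu a)) (hv c),
      mul_nonneg (mul_nonneg (hbnn a c) (hu c)) (hv a)]
  have hpot (z : X) : V z * ⟪(u z : ℂ), (v z : ℂ)⟫_ℝ = 0 := by
    rw [real_inner_ofReal_ofReal, huv, mul_zero]
  have hrow := (hasSum_edge_polar hbnn hdeg hU hV x).summable
  have hsum := (hasSum_tsum_edge_polar hbnn hdeg hU hV hsym).summable
  have hxy : ∑' a, ∑' c, b a c * ⟪(u a : ℂ) - u c, (v a : ℂ) - v c⟫_ℝ ≤ -(b x y * u x * v y) :=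
    calc _ ≤ ∑' c, b x c * ⟪(u x : ℂ) - u c, (v x : ℂ) - v c⟫_ℝ :=
          tsum_le_of_nonpos hsum (fun a => tsum_nonpos (hedge_nonpos a)) x
      _ ≤ b x y * ⟪(u x : ℂ) - u y, (v x : ℂ) - v y⟫_ℝ :=
          tsum_le_of_nonpos hrow (hedge_nonpos x) y
      _ ≤ -(b x y * u x * v y) := by
          rw [hedge]
          nlinarith [mul_nonneg (mul_nonneg (hbnn x y) (hu y)) (hv x)]
  simp only [qPolar, hpot, tsum_zero, add_zero]
  linarith

lemma mul_mul_eq_zero_of_qForm_eq_zero (hbnn : ∀ x y, 0 ≤ b x y) (hsym : ∀ x y, b x y = b y x)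
    (hdeg : ∀ x, Summable (b x)) (V : X → ℝ)
    (hq : ∀ f : X → ℂ, {x | f x ≠ 0}.Finite → 0 ≤ qForm b V f)
    (hu : ∀ x, 0 ≤ u x) (hv : ∀ x, 0 ≤ v x)
    (huv : ∀ x, u x * v x = 0) (hufin : {x | u x ≠ 0}.Finite) (hvfin : {x | v x ≠ 0}.Finite)
    (hzero : qForm b V (fun z => (u z : ℂ)) = 0) (x y : X) :
    b x y * u x * v y = 0 := by
  set U : X → ℂ := fun z => (u z : ℂ)
  set W : X → ℂ := fun z => (v z : ℂ)
  have hU : {z | U z ≠ 0}.Finite := by simpa [U] using hufin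
  have hW : {z | W z ≠ 0}.Finite := by simpa [W] using hvfin
  have htW (t : ℝ) : {z | (t • W) z ≠ 0}.Finite :=
    hW.subset (Function.support_const_smul_subset t W)
  have hperturb (t : ℝ) :
      qForm b V (U + t • W) = 2 * t * qPolar b V U W + t ^ 2 * qForm b V W := by
    rw [qForm_add hbnn hsym hdeg V hU (htW t), qForm_smul, qPolar_smul_right, hzero]
    ring
  have hP := qPolar_ofReal_le hbnn hsym hdeg V hu hv huv hufin hvfin x y
  have hle : ∀ t > 0, b x y * u x * v y ≤ t * qForm b V W := by
    intro t ht
    have h0 := hperturb t ▸ hq (U + t • W) (Function.HasFiniteSupport.add hU (htW t))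
    refine le_of_mul_le_mul_left ?_ ht
    nlinarith
  exact le_antisymm (nonpos_of_forall_pos_le_mul hle)
    (mul_nonneg (mul_nonneg (hbnn x y) (hu x)) (hv y))

end Nonnegative

theorem edge_eq_zero_of_qForm_eq_zero (hbnn : ∀ x y, 0 ≤ b x y) (hsym : ∀ x y, b x y = b y x)
    (hdeg : ∀ x, Summable (b x)) (V : X → ℝ)
    (hq : ∀ f : X → ℂ, {x | f x ≠ 0}.Finite → 0 ≤ qForm b V f)
    {h : X → ℝ} (hpos : ∀ x, 0 ≤ h x) (hfin : {x | h x ≠ 0}.Finite)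
    (hzero : qForm b V (fun x => (h x : ℂ)) = 0) {x y : X} (hx : 0 < h x) (hy : h y = 0) :
    b x y = 0 := by
  classical
  have hδ := mul_mul_eq_zero_of_qForm_eq_zero (v := Pi.single y 1) hbnn hsym hdeg V hq hpos
    (fun z => by by_cases hz : z = y <;> simp [hz])
    (fun z => by by_cases hz : z = y <;> simp [hz, hy])
    hfin ((Set.finite_singleton y).subset Pi.support_single_subset) hzero x y
  simpa [hx.ne'] using hδ

end WeightedGraph

theorem qForm_indicator_le_general
    {X : Type*}
    (b : X → X → ℝ)
    (hbnn : ∀ x y, 0 ≤ b x y)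
    (hsym : ∀ x y, b x y = b y x)
    (hdeg : ∀ x, Summable fun y => b x y)
    (V : X → ℝ)
    (hq : ∀ f : X → ℂ, {x | f x ≠ 0}.Finite → 0 ≤ qForm b V f)
    (h : X → ℝ) (hpos : ∀ x, 0 ≤ h x) (hfin : {x | h x ≠ 0}.Finite)
    (hzero : qForm b V (fun x => (h x : ℂ)) = 0)
    (φ : X → ℂ) (hφ : {x | φ x ≠ 0}.Finite) :
    qForm b V (fun x => if 0 < h x then φ x else 0) ≤ qForm b V φ := by
  set φ₁ : X → ℂ := fun x => if 0 < h x then φ x else 0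
  set φ₀ : X → ℂ := fun x => if 0 < h x then 0 else φ x
  have hsplit : φ = φ₁ + φ₀ := funext fun x => by by_cases hx : 0 < h x <;> simp [φ₁, φ₀, hx]
  have hφ₁ : {x | φ₁ x ≠ 0}.Finite :=
    hφ.subset fun x => by by_cases hx : 0 < h x <;> simp [φ₁, hx]
  have hφ₀ : {x | φ₀ x ≠ 0}.Finite :=
    hφ.subset fun x => by by_cases hx : 0 < h x <;> simp [φ₀, hx]
  have horth : qPolar b V φ₁ φ₀ = 0 := by
    refine qPolar_eq_zero_of_disjoint hsym V (fun x => ?_) fun x y hx hy => ?_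
    · by_cases hx : 0 < h x <;> simp [φ₁, φ₀, hx]
    · have hx' : 0 < h x := by by_contra hx'; simp [φ₁, hx'] at hx
      have hy' : h y = 0 := (hpos y).antisymm' (not_lt.1 fun hy' => by simp [φ₀, hy'] at hy)
      exact edge_eq_zero_of_qForm_eq_zero hbnn hsym hdeg V hq hpos hfin hzero hx' hy'
  calc qForm b V φ₁ ≤ qForm b V φ₁ + 2 * qPolar b V φ₁ φ₀ + qForm b V φ₀ := by
        linarith [hq φ₀ hφ₀]
    _ = qForm b V φ := by rw [hsplit, qForm_add hbnn hsym hdeg V hφ₁ hφ₀]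

/-- **Cutting off along the zero set of a null vector of `q_V`.**
Let `(X,b)` be a weighted graph and `V : X → ℝ` such that the quadratic form `q_V` is
nonnegative on `C_c(X)`.  Let `h ∈ C_c(X)` be nonnegative real-valued with `q_V(h) = 0`.
Then for every `φ ∈ C_c(X)` we have `q_V(φ·1_{{h>0}}) ≤ q_V(φ)`. -/
theorem qForm_indicator_le
    {X : Type*} [Countable X]
    (b : X → X → ℝ)
    (hb0 : ∀ x, b x x = 0)
    (hbnn : ∀ x y, 0 ≤ b x y)
    (hsym : ∀ x y, b x y = b y x)
    (hdeg : ∀ x, Summable fun y => b x y)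
    (V : X → ℝ)
    (hq : ∀ f : X → ℂ, {x | f x ≠ 0}.Finite → 0 ≤ qForm b V f)
    (h : X → ℝ) (hpos : ∀ x, 0 ≤ h x) (hfin : {x | h x ≠ 0}.Finite)
    (hzero : qForm b V (fun x => (h x : ℂ)) = 0)
    (φ : X → ℂ) (hφ : {x | φ x ≠ 0}.Finite) :
    qForm b V (fun x => if 0 < h x then φ x else 0) ≤ qForm b V φ :=
  qForm_indicator_le_general b hbnn hsym hdeg V hq h hpos hfin hzero φ hφ
end

section
/- Let (X,b) be a locally finite weighted graph, V : X → ℝ, and x ∈ X. Then the Schrödinger operator L_V satisfies the maximum principle at x (i.e., there exists n ∈ ℕ such that for every f ∈ C(X), L_V f(x) = 0 and |f(x)| = sup_{y ∈ B_n(x)} |f(y)| together imply |f(x)| = |f(y)| for all y ∈ B_n(x)) if and only if V(x) ≥ 0 or V(x) + 2·deg(x) ≤ 0. -/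
/-- The combinatorial ball `B_n(x)`: the set of vertices that can be reached from `x`
by a path of length at most `n` in the weighted graph `b` (where `y ∼ z` iff `b y z > 0`). -/
def ball {X : Type*} (b : X → X → ℝ) : ℕ → X → Set X
  | 0, x => {x}
  | n + 1, x => ball b n x ∪ {z | ∃ y ∈ ball b n x, 0 < b y z}

lemma ball_succ {X : Type*} (b : X → X → ℝ) (n : ℕ) (x : X) :
    ball b (n + 1) x = ball b n x ∪ {z | ∃ y ∈ ball b n x, 0 < b y z} := rfl

lemma ball_zero {X : Type*} (b : X → X → ℝ) (x : X) : ball b 0 x = {x} := rfl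

lemma mem_ball_one {X : Type*} (b : X → X → ℝ) (x y : X) :
    y ∈ ball b 1 x ↔ y = x ∨ 0 < b x y := by
  rw [show (1 : ℕ) = 0 + 1 from rfl, ball_succ, ball_zero]
  simp [Set.mem_union]

lemma ball_one_subset {X : Type*} (b : X → X → ℝ) {n : ℕ} (hn : 0 < n) (x : X) :
    ball b 1 x ⊆ ball b n x := by
  induction n with
  | zero => omega
  | succ m ih =>
    rcases Nat.eq_zero_or_pos m with h | h
    · subst h; exact subset_rfl
    · exact (ih h).trans (by rw [ball_succ]; exact Set.subset_union_left)

/-- **Characterization of the pointwise maximum principle.**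
Let `(X,b)` be a locally finite weighted graph, `V : X → ℝ` and `x ∈ X`.  The Schrödinger
operator `L_V f x = ∑_y b(x,y)(f x - f y) + V x · f x` satisfies the maximum principle at `x`
(i.e. there is `n ≥ 1` such that for every `f ∈ C(X)` with `L_V f x = 0` and
`|f x| = sup_{y ∈ B_n(x)} |f y|` one has `|f y| = |f x|` for all `y ∈ B_n(x)`)
if and only if `V x ≥ 0` or `V x + 2 deg x ≤ 0`. -/
theorem maximum_principle_iff
    {X : Type*} [Countable X]
    (b : X → X → ℝ)
    (hb0 : ∀ x, b x x = 0)
    (hbnn : ∀ x y, 0 ≤ b x y)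
    (hsym : ∀ x y, b x y = b y x)
    (hlf : ∀ x, {y | b x y ≠ 0}.Finite)
    (V : X → ℝ) (x : X) :
    (∃ n : ℕ, 0 < n ∧ ∀ f : X → ℂ,
        ((∑ᶠ y, (b x y : ℂ) * (f x - f y)) + (V x : ℂ) * f x = 0) →
        (∀ y ∈ ball b n x, ‖f y‖ ≤ ‖f x‖) →
        ∀ y ∈ ball b n x, ‖f y‖ = ‖f x‖) ↔
      (0 ≤ V x ∨ V x + 2 * (∑ᶠ y, b x y) ≤ 0) := by
  classical
  set s : Finset X := (hlf x).toFinset with hs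
  have hmem : ∀ y, y ∈ s ↔ b x y ≠ 0 := by intro y; simp [hs]
  have hdeg : (∑ᶠ y, b x y) = ∑ y ∈ s, b x y := by
    apply finsum_eq_sum_of_support_subset
    intro y hy
    simp only [Function.mem_support] at hy
    simpa [hmem] using hy
  set D := ∑ y ∈ s, b x y with hD
  have hDnn : 0 ≤ D := Finset.sum_nonneg fun y _ => hbnn x y
  have hxnots : x ∉ s := by simp [hmem, hb0]
  have hfin : ∀ g : X → ℂ, (∑ᶠ y, (b x y : ℂ) * g y) = ∑ y ∈ s, (b x y : ℂ) * g y := by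
    intro g
    apply finsum_eq_sum_of_support_subset
    intro y hy
    simp only [Function.mem_support] at hy
    have hby : b x y ≠ 0 := by
      intro h; apply hy; simp [h]
    simpa [hmem] using hby
  constructor
  · -- forward direction (contrapositive)
    intro hLHS
    by_contra hV
    push_neg at hV
    rw [hdeg] at hV
    obtain ⟨hV1, hV2⟩ := hV
    have hDpos : 0 < D := by linarith
    set c : ℝ := (D + V x) / D with hc
    have hc1 : c < 1 := by rw [hc, div_lt_one hDpos]; linarith
    have hc2 : -1 < c := by rw [hc, lt_div_iff₀ hDpos]; linarith
    obtain ⟨n, hn, H⟩ := hLHS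
    set f : X → ℂ := fun y => if y = x then 1 else (c : ℂ) with hf
    have hfx : f x = 1 := by simp [hf]
    have hLf : (∑ᶠ y, (b x y : ℂ) * (f x - f y)) + (V x : ℂ) * f x = 0 := by
      rw [hfin (fun y => f x - f y), hfx]
      have hcongr : ∀ y ∈ s, (b x y : ℂ) * (1 - f y) = (b x y : ℂ) * (1 - (c : ℂ)) := by
        intro y hy
        have hyx : y ≠ x := fun h => hxnots (h ▸ hy)
        simp [hf, hyx]
      rw [Finset.sum_congr rfl hcongr, ← Finset.sum_mul]
      have hsumc : (∑ y ∈ s, ((b x y : ℝ) : ℂ)) = ((D : ℝ) : ℂ) := by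
        rw [hD]; push_cast; rfl
      rw [hsumc, mul_one]
      have hre : D * (1 - c) + V x = 0 := by
        rw [hc]; field_simp; ring
      exact_mod_cast hre
    have hcabs : |c| < 1 := abs_lt.mpr ⟨hc2, hc1⟩
    have hmax : ∀ y ∈ ball b n x, ‖f y‖ ≤ ‖f x‖ := by
      intro y _
      rw [hfx]
      by_cases hyx : y = x
      · simp [hf, hyx]
      · simp only [hf, hyx, if_false, norm_one, Complex.norm_real, Real.norm_eq_abs]
        exact le_of_lt hcabs
    -- pick a neighbor
    have hsne : s.Nonempty := by
      by_contra h
      rw [Finset.not_nonempty_iff_eq_empty] at h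
      rw [h, Finset.sum_empty] at hD
      linarith
    obtain ⟨y0, hy0⟩ := hsne
    have hby0 : 0 < b x y0 := lt_of_le_of_ne (hbnn x y0) (Ne.symm ((hmem y0).mp hy0))
    have hy0x : y0 ≠ x := fun h => hxnots (h ▸ hy0)
    have hy0ball : y0 ∈ ball b n x :=
      ball_one_subset b hn x ((mem_ball_one b x y0).mpr (Or.inr hby0))
    have := H f hLf hmax y0 hy0ball
    rw [hfx] at this
    simp only [hf, hy0x, if_false, norm_one, Complex.norm_real, Real.norm_eq_abs] at this
    linarith [abs_lt.mp hcabs]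
  · -- backward direction, n = 1
    intro hV
    rw [hdeg] at hV
    refine ⟨1, one_pos, ?_⟩
    intro f hL hmax y hy
    by_cases hfx : f x = 0
    · have h1 := hmax y hy
      rw [hfx, norm_zero] at h1
      rw [hfx, norm_zero]
      exact le_antisymm h1 (norm_nonneg _)
    · set M := ‖f x‖ with hM
      have hMpos : 0 < M := norm_pos_iff.mpr hfx
      have hL' : (((D : ℝ) : ℂ) + (V x : ℂ)) * f x = ∑ y ∈ s, (b x y : ℂ) * f y := by
        rw [hfin (fun y => f x - f y)] at hL
        have hexp : ∑ y ∈ s, (b x y : ℂ) * (f x - f y)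
            = (∑ y ∈ s, ((b x y : ℝ) : ℂ)) * f x - ∑ y ∈ s, (b x y : ℂ) * f y := by
          rw [Finset.sum_mul, ← Finset.sum_sub_distrib]
          exact Finset.sum_congr rfl fun y _ => by ring
        have hsumc : (∑ y ∈ s, ((b x y : ℝ) : ℂ)) = ((D : ℝ) : ℂ) := by
          rw [hD]; push_cast; rfl
        rw [hexp, hsumc] at hL
        linear_combination hL
      have hmem_ball : ∀ y ∈ s, y ∈ ball b 1 x := by
        intro z hz
        exact (mem_ball_one b x z).mpr
          (Or.inr (lt_of_le_of_ne (hbnn x z) (Ne.symm ((hmem z).mp hz))))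
      have h1 : ‖∑ y ∈ s, (b x y : ℂ) * f y‖ ≤ ∑ y ∈ s, b x y * ‖f y‖ := by
        refine (norm_sum_le _ _).trans (le_of_eq ?_)
        refine Finset.sum_congr rfl fun z _ => ?_
        rw [norm_mul, Complex.norm_real, Real.norm_eq_abs, abs_of_nonneg (hbnn x z)]
      have h2 : ∑ y ∈ s, b x y * ‖f y‖ ≤ ∑ y ∈ s, b x y * M := by
        refine Finset.sum_le_sum fun z hz => ?_
        exact mul_le_mul_of_nonneg_left (hmax z (hmem_ball z hz)) (hbnn x z)
      have hsmM : ∑ y ∈ s, b x y * M = D * M := by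
        rw [hD, Finset.sum_mul]
      have hnormL : ‖(((D : ℝ) : ℂ) + (V x : ℂ)) * f x‖ = |D + V x| * M := by
        rw [norm_mul]
        congr 1
        rw [show ((D : ℝ) : ℂ) + (V x : ℂ) = (((D + V x : ℝ)) : ℂ) by push_cast; ring,
          Complex.norm_real, Real.norm_eq_abs]
      have hchain : |D + V x| * M ≤ D * M := by
        rw [← hnormL, hL']
        exact h1.trans (h2.trans (le_of_eq hsmM))
      have habs : |D + V x| ≤ D := le_of_mul_le_mul_right hchain hMpos
      have hkey : |D + V x| = D := by
        rcases hV with hV | hV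
        · have h3 : D + V x ≤ |D + V x| := le_abs_self _
          have h4 : V x = 0 := by linarith
          rw [h4, add_zero, abs_of_nonneg hDnn]
        · have h3 : -(D + V x) ≤ |D + V x| := neg_le_abs _
          have h4 : V x = -(2 * D) := by linarith
          rw [h4]
          rw [show D + -(2 * D) = -D by ring, abs_neg, abs_of_nonneg hDnn]
      -- all inequalities are equalities
      have heq : ∑ y ∈ s, b x y * ‖f y‖ = ∑ y ∈ s, b x y * M := by
        refine le_antisymm h2 ?_
        have : D * M ≤ ∑ y ∈ s, b x y * ‖f y‖ := by
          rw [← hkey]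
          calc |D + V x| * M = ‖(((D : ℝ) : ℂ) + (V x : ℂ)) * f x‖ := hnormL.symm
            _ = ‖∑ y ∈ s, (b x y : ℂ) * f y‖ := by rw [hL']
            _ ≤ ∑ y ∈ s, b x y * ‖f y‖ := h1
        linarith [hsmM]
      have hzero : ∑ y ∈ s, b x y * (M - ‖f y‖) = 0 := by
        have : ∑ y ∈ s, b x y * (M - ‖f y‖)
            = ∑ y ∈ s, b x y * M - ∑ y ∈ s, b x y * ‖f y‖ := by
          rw [← Finset.sum_sub_distrib]
          exact Finset.sum_congr rfl fun z _ => by ring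
        rw [this, heq, sub_self]
      have hterm : ∀ z ∈ s, b x z * (M - ‖f z‖) = 0 :=
        (Finset.sum_eq_zero_iff_of_nonneg fun z hz =>
          mul_nonneg (hbnn x z) (by linarith [hmax z (hmem_ball z hz)])).mp hzero
      rcases (mem_ball_one b x y).mp hy with hyx | hby
      · rw [hyx]
      · have hys : y ∈ s := (hmem y).mpr (ne_of_gt hby)
        have := hterm y hys
        have hbne : b x y ≠ 0 := ne_of_gt hby
        have : M - ‖f y‖ = 0 := by
          rcases mul_eq_zero.mp this with h | h
          · exact absurd h hbne
          · exact h
        linarith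
end

section
/- Let X = ℕ₀ and let (b_n)_{n≥1} be a sequence of positive real numbers with ∑_{n≥1} b_n < ∞. Define the star graph b : ℕ₀×ℕ₀ → [0,∞) by b(n,0) = b(0,n) = b_n for n ≥ 1 and b(n,m) = 0 otherwise, and let L be the graph Laplacian with domain D(L) = {g ∈ C(ℕ₀) : ∑_{n≥1} b_n|g(n)| < ∞}, acting by Lg(x) = ∑_{y} b(x,y)(g(x)-g(y)). Then the image of L equals {f ∈ C(ℕ₀) : ∑_{n≥1} |f(n)| < ∞ and f(0) = -∑_{n≥1} f(n)}. In particular, L is not surjective. -/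
/-- The edge weights of the infinite star graph over `ℕ`: the hub `0` is joined to `n ≥ 1`
with weight `bn n`, and there are no other edges. -/
def starWeight (bn : ℕ → ℝ) : ℕ → ℕ → ℝ
  | 0, 0 => 0
  | 0, m + 1 => bn (m + 1)
  | n + 1, 0 => bn (n + 1)
  | _ + 1, _ + 1 => 0

/-- **The infinite star graph: failure of surjectivity without local finiteness.**
Let `(b_n)_{n ≥ 1}` be positive reals with `∑_{n ≥ 1} b_n < ∞` and consider the star graph
`b(n,0) = b(0,n) = b_n` on `ℕ`.  The graph Laplacian `L`, defined on
`D(L) = {g : ∑_y b(x,y)|g y| < ∞ for all x}` by `Lg x = ∑_y b(x,y)(g x - g y)`, has image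
`{f : ∑_{n ≥ 1} |f n| < ∞ and f 0 = -∑_{n ≥ 1} f n}`.  In particular, `L` is not
surjective. -/
theorem star_graph_laplacian_image
    (bn : ℕ → ℝ) (hpos : ∀ n, 0 < bn (n + 1))
    (hsum : Summable fun n => bn (n + 1)) :
    {f : ℕ → ℂ | ∃ g : ℕ → ℂ,
        (∀ x, Summable fun y => starWeight bn x y * ‖g y‖) ∧
        ∀ x, ∑' y, (starWeight bn x y : ℂ) * (g x - g y) = f x} =
      {f : ℕ → ℂ | Summable (fun n => f (n + 1)) ∧ f 0 = -∑' n, f (n + 1)} ∧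
    ¬ ∀ f : ℕ → ℂ, ∃ g : ℕ → ℂ,
        (∀ x, Summable fun y => starWeight bn x y * ‖g y‖) ∧
        ∀ x, ∑' y, (starWeight bn x y : ℂ) * (g x - g y) = f x := by
  have hbne : ∀ n, (bn (n + 1) : ℂ) ≠ 0 := fun n => by
    exact_mod_cast (hpos n).ne'
  have hmem : ∀ f : ℕ → ℂ,
      (∃ g : ℕ → ℂ,
        (∀ x, Summable fun y => starWeight bn x y * ‖g y‖) ∧
        ∀ x, ∑' y, (starWeight bn x y : ℂ) * (g x - g y) = f x) ↔
      (Summable (fun n => f (n + 1)) ∧ f 0 = -∑' n, f (n + 1)) := by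
    intro f
    constructor
    · rintro ⟨g, hdom, hL⟩
      -- value at n+1
      have hsucc : ∀ n : ℕ, f (n + 1) = (bn (n + 1) : ℂ) * (g (n + 1) - g 0) := by
        intro n
        rw [← hL (n + 1), tsum_eq_single 0]
        · rfl
        · intro y hy
          match y with
          | 0 => exact absurd rfl hy
          | m + 1 => simp [starWeight]
      -- summability
      have hg0 : Summable fun n => bn (n + 1) * ‖g (n + 1)‖ :=
        (hdom 0).comp_injective Nat.succ_injective
      have hA : Summable fun n => (bn (n + 1) : ℂ) * g (n + 1) := by
        apply Summable.of_norm
        refine hg0.congr fun n => ?_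
        rw [norm_mul, Complex.norm_real, Real.norm_eq_abs, abs_of_nonneg (hpos n).le]
      have hB : Summable fun n => (bn (n + 1) : ℂ) * g 0 := by
        have : Summable fun n => (bn (n + 1) : ℂ) := by
          apply Summable.of_norm
          refine hsum.congr fun n => ?_
          rw [Complex.norm_real, Real.norm_eq_abs, abs_of_nonneg (hpos n).le]
        exact this.mul_right _
      have hFsum : Summable fun n => f (n + 1) := by
        refine ((hA.sub hB).congr fun n => ?_)
        rw [← mul_sub, ← hsucc]
      refine ⟨hFsum, ?_⟩
      -- value at 0
      rw [← hL 0]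
      have hinj : Function.Injective Nat.succ := Nat.succ_injective
      have hsupp : Function.support
          (fun y => (starWeight bn 0 y : ℂ) * (g 0 - g y)) ⊆ Set.range Nat.succ := by
        intro y hy
        match y with
        | 0 => simp [starWeight] at hy
        | m + 1 => exact ⟨m, rfl⟩
      rw [← hinj.tsum_eq hsupp]
      have : ∀ n : ℕ, (starWeight bn 0 (Nat.succ n) : ℂ) * (g 0 - g (Nat.succ n))
          = -f (n + 1) := by
        intro n
        rw [hsucc n]
        show (bn (n + 1) : ℂ) * (g 0 - g (n + 1)) = _
        ring
      rw [tsum_congr this, tsum_neg]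
    · rintro ⟨hf, hf0⟩
      refine ⟨fun n => match n with
        | 0 => 0
        | m + 1 => f (m + 1) / (bn (m + 1) : ℂ), ?_, ?_⟩
      · intro x
        match x with
        | 0 =>
          rw [← summable_nat_add_iff 1]
          have hfn : Summable fun n => ‖f (n + 1)‖ := hf.norm
          refine hfn.congr fun n => ?_
          show ‖f (n + 1)‖ = bn (n + 1) * ‖f (n + 1) / (bn (n + 1) : ℂ)‖
          rw [norm_div, Complex.norm_real, Real.norm_eq_abs, abs_of_nonneg (hpos n).le,
            mul_div_cancel₀ _ (hpos n).ne']
        | n + 1 =>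
          apply summable_of_ne_finset_zero (s := {0})
          intro y hy
          match y with
          | 0 => simp at hy
          | m + 1 => simp [starWeight]
      · intro x
        match x with
        | 0 =>
          have hinj : Function.Injective Nat.succ := Nat.succ_injective
          have hsupp : Function.support
              (fun y => (starWeight bn 0 y : ℂ) *
                ((match 0 with
                  | 0 => (0 : ℂ)
                  | m + 1 => f (m + 1) / (bn (m + 1) : ℂ)) -
                 (match y with
                  | 0 => (0 : ℂ)
                  | m + 1 => f (m + 1) / (bn (m + 1) : ℂ)))) ⊆ Set.range Nat.succ := by
            intro y hy
            match y with
            | 0 => simp [starWeight] at hy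
            | m + 1 => exact ⟨m, rfl⟩
          rw [← hinj.tsum_eq hsupp]
          have : ∀ n : ℕ, (starWeight bn 0 (Nat.succ n) : ℂ) *
              ((0 : ℂ) - f (n + 1) / (bn (n + 1) : ℂ)) = -f (n + 1) := by
            intro n
            show (bn (n + 1) : ℂ) * (0 - f (n + 1) / (bn (n + 1) : ℂ)) = _
            rw [zero_sub, mul_neg, mul_div_cancel₀ _ (hbne n)]
          rw [tsum_congr this, tsum_neg, ← hf0]
        | n + 1 =>
          rw [tsum_eq_single 0]
          · show (bn (n + 1) : ℂ) * (f (n + 1) / (bn (n + 1) : ℂ) - 0) = f (n + 1)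
            rw [sub_zero, mul_div_cancel₀ _ (hbne n)]
          · intro y hy
            match y with
            | 0 => exact absurd rfl hy
            | m + 1 => simp [starWeight]
  constructor
  · ext f
    exact hmem f
  · intro h
    have h1 : Summable fun _ : ℕ => (1 : ℂ) := ((hmem (fun _ => 1)).mp (h _)).1
    rw [summable_const_iff] at h1
    exact one_ne_zero h1
end

section
/- Let (X,b) be a locally finite weighted graph, let V : X → ℝ, and suppose there exist λ ∈ ℝ and a nonzero finitely supported function φ ∈ C_c(X) with L_V φ = λφ. Then the operator L_V - λ·Id : C(X) → C(X) is not surjective. -/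
/-- **Finitely supported eigenfunctions obstruct surjectivity.**
Let `(X,b)` be a locally finite weighted graph, `V : X → ℝ`, and suppose there are `λ ∈ ℝ`
and a nonzero finitely supported `φ ∈ C_c(X)` with `L_V φ = λ φ`.  Then the operator
`L_V - λ·Id` on `C(X)` is not surjective. -/
theorem not_surjective_of_finitely_supported_eigenfunction
    {X : Type*} [Countable X]
    (b : X → X → ℝ)
    (hb0 : ∀ x, b x x = 0)
    (hbnn : ∀ x y, 0 ≤ b x y)
    (hsym : ∀ x y, b x y = b y x)
    (hlf : ∀ x, {y | b x y ≠ 0}.Finite)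
    (V : X → ℝ) (lam : ℝ)
    (φ : X → ℂ) (hφ0 : φ ≠ 0) (hφfin : {x | φ x ≠ 0}.Finite)
    (heig : ∀ x, (∑ᶠ y, (b x y : ℂ) * (φ x - φ y)) + (V x : ℂ) * φ x = (lam : ℂ) * φ x) :
    ¬ Function.Surjective (fun (f : X → ℂ) (x : X) =>
      ((∑ᶠ y, (b x y : ℂ) * (f x - f y)) + (V x : ℂ) * f x) - (lam : ℂ) * f x) := by
  classical
  intro hsurj
  obtain ⟨f, hf⟩ := hsurj (fun x => (starRingEnd ℂ) (φ x))
  set S : Finset X := hφfin.toFinset with hS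
  set T : Finset X := S ∪ S.biUnion (fun x => (hlf x).toFinset) with hT
  have hST : S ⊆ T := Finset.subset_union_left
  have hφS : ∀ x ∉ S, φ x = 0 := by
    intro x hx
    by_contra h
    exact hx (hφfin.mem_toFinset.mpr h)
  -- neighbors of points in S lie in T
  have hnbr : ∀ x ∈ S, ∀ y, b x y ≠ 0 → y ∈ T := by
    intro x hx y hy
    exact Finset.mem_union_right _ (Finset.mem_biUnion.mpr ⟨x, hx, (hlf x).mem_toFinset.mpr hy⟩)
  -- rewrite the finsum for f at points of S as a finite sum over T
  have hfsum : ∀ x ∈ S, (∑ᶠ y, (b x y : ℂ) * (f x - f y))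
      = ∑ y ∈ T, (b x y : ℂ) * (f x - f y) := by
    intro x hx
    apply finsum_eq_finset_sum_of_support_subset
    intro y hy
    simp only [Function.mem_support] at hy
    have hb : b x y ≠ 0 := by
      intro h; apply hy; simp [h]
    exact hnbr x hx y hb
  -- rewrite the finsum for φ at every point as a finite sum over T
  have hφsum : ∀ x, (∑ᶠ y, (b x y : ℂ) * (φ x - φ y))
      = ∑ y ∈ T, (b x y : ℂ) * (φ x - φ y) := by
    intro x
    apply finsum_eq_finset_sum_of_support_subset
    intro y hy
    simp only [Function.mem_support] at hy
    have hb : b x y ≠ 0 := by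
      intro h; apply hy; simp [h]
    by_cases hx : x ∈ S
    · exact hnbr x hx y hb
    · have hφy : φ y ≠ 0 := by
        intro h
        apply hy
        rw [hφS x hx, h]
        simp
      exact hST (hφfin.mem_toFinset.mpr hφy)
  -- L_{V-λ} φ = 0 everywhere
  have hLφ : ∀ x, (∑ y ∈ T, (b x y : ℂ) * (φ x - φ y)) + ((V x : ℂ) - lam) * φ x = 0 := by
    intro x
    have := heig x
    rw [hφsum x] at this
    linear_combination this
  -- L_{V-λ} f = conj φ on S
  have hLf : ∀ x ∈ S, (∑ y ∈ T, (b x y : ℂ) * (f x - f y)) + ((V x : ℂ) - lam) * f x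
      = (starRingEnd ℂ) (φ x) := by
    intro x hx
    have := congrFun hf x
    simp only at this
    rw [hfsum x hx] at this
    linear_combination this
  -- Green's identity on T
  have hgreen : ∑ x ∈ T, ∑ y ∈ T, (b x y : ℂ) * (f x - f y) * φ x
      = ∑ x ∈ T, ∑ y ∈ T, (b x y : ℂ) * (φ x - φ y) * f x := by
    have hBC : ∑ x ∈ T, ∑ y ∈ T, (b x y : ℂ) * f y * φ x
        = ∑ x ∈ T, ∑ y ∈ T, (b x y : ℂ) * φ y * f x := by
      rw [Finset.sum_comm]
      apply Finset.sum_congr rfl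
      intro x _
      apply Finset.sum_congr rfl
      intro y _
      rw [hsym]
      ring
    calc ∑ x ∈ T, ∑ y ∈ T, (b x y : ℂ) * (f x - f y) * φ x
        = ∑ x ∈ T, ((∑ y ∈ T, (b x y : ℂ) * f x * φ x) - ∑ y ∈ T, (b x y : ℂ) * f y * φ x) := by
          apply Finset.sum_congr rfl; intro x _
          rw [← Finset.sum_sub_distrib]
          apply Finset.sum_congr rfl; intro y _; ring
      _ = (∑ x ∈ T, ∑ y ∈ T, (b x y : ℂ) * f x * φ x) - ∑ x ∈ T, ∑ y ∈ T, (b x y : ℂ) * f y * φ x := by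
          rw [Finset.sum_sub_distrib]
      _ = (∑ x ∈ T, ∑ y ∈ T, (b x y : ℂ) * f x * φ x) - ∑ x ∈ T, ∑ y ∈ T, (b x y : ℂ) * φ y * f x := by
          rw [hBC]
      _ = ∑ x ∈ T, ∑ y ∈ T, (b x y : ℂ) * (φ x - φ y) * f x := by
          rw [← Finset.sum_sub_distrib]
          apply Finset.sum_congr rfl; intro x _
          rw [← Finset.sum_sub_distrib]
          apply Finset.sum_congr rfl; intro y _; ring
  -- the key vanishing
  have key : ∑ x ∈ S, (starRingEnd ℂ) (φ x) * φ x = 0 := by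
    calc ∑ x ∈ S, (starRingEnd ℂ) (φ x) * φ x
        = ∑ x ∈ S, ((∑ y ∈ T, (b x y : ℂ) * (f x - f y) * φ x) + ((V x : ℂ) - lam) * f x * φ x) := by
          apply Finset.sum_congr rfl
          intro x hx
          rw [← hLf x hx, add_mul, Finset.sum_mul]
      _ = ∑ x ∈ T, ((∑ y ∈ T, (b x y : ℂ) * (f x - f y) * φ x) + ((V x : ℂ) - lam) * f x * φ x) := by
          apply Finset.sum_subset hST
          intro x _ hx
          rw [hφS x hx]
          simp
      _ = (∑ x ∈ T, ∑ y ∈ T, (b x y : ℂ) * (f x - f y) * φ x)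
            + ∑ x ∈ T, ((V x : ℂ) - lam) * f x * φ x := Finset.sum_add_distrib
      _ = (∑ x ∈ T, ∑ y ∈ T, (b x y : ℂ) * (φ x - φ y) * f x)
            + ∑ x ∈ T, ((V x : ℂ) - lam) * φ x * f x := by
          rw [hgreen]
          congr 1
          apply Finset.sum_congr rfl
          intro x _; ring
      _ = ∑ x ∈ T, ((∑ y ∈ T, (b x y : ℂ) * (φ x - φ y)) + ((V x : ℂ) - lam) * φ x) * f x := by
          rw [← Finset.sum_add_distrib]
          apply Finset.sum_congr rfl
          intro x _
          rw [add_mul, Finset.sum_mul]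
      _ = 0 := by
          apply Finset.sum_eq_zero
          intro x _
          rw [hLφ x, zero_mul]
  -- conclude φ = 0, contradiction
  have key2 : ∑ x ∈ S, Complex.normSq (φ x) = 0 := by
    have : ((∑ x ∈ S, Complex.normSq (φ x) : ℝ) : ℂ) = 0 := by
      push_cast
      rw [← key]
      apply Finset.sum_congr rfl
      intro x _
      rw [mul_comm, Complex.mul_conj]
    exact_mod_cast this
  have hall : ∀ x ∈ S, Complex.normSq (φ x) = 0 := by
    intro x hx
    exact (Finset.sum_eq_zero_iff_of_nonneg (fun y _ => Complex.normSq_nonneg _)).mp key2 x hx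
  apply hφ0
  funext x
  by_cases hx : x ∈ S
  · exact Complex.normSq_eq_zero.mp (hall x hx)
  · exact hφS x hx
end
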